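/- arXiv:math/0403541 — 14 statements merged into one kernel-verified Lean document; each statement's English description precedes it below -/
import Mathlib

section
/- Let μ and ν be partitions with n parts and let (λ, ρ) = (λ(μ,ν), ρ(μ,ν)) be the image of (μ, ν) under the *-operation. Then λ and ρ are again partitions with n parts (i.e., weakly decreasing sequences of nonnegative integers), and |λ| + |ρ| = |μ| + |ν|. -/
/-- A partition with `n` (possibly zero) parts: a weakly decreasing sequence of
nonnegative integers, recorded 0-indexed, vanishing from index `n` on. -/
def IsPartitionN (n : ℕ) (μ : ℕ → ℕ) : Prop :=
  Antitone μ ∧ ∀ i, n ≤ i → μ i = 0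

/-- A partition (finitely many nonzero parts), 0-indexed. -/
def IsPartition (μ : ℕ → ℕ) : Prop :=
  Antitone μ ∧ ∃ N, ∀ i, N ≤ i → μ i = 0

/-- `λ(μ,ν)_k = μ_k − k + #{j : 1 ≤ j ≤ n, ν_j − j ≥ μ_k − k}`, 0-indexed,
so the (k+1)-st part of `λ(μ,ν)`, as an integer. -/
def lamStar (n : ℕ) (μ ν : ℕ → ℕ) (k : ℕ) : ℤ :=
  (μ k : ℤ) - (k + 1) +
    ((Finset.range n).filter (fun j => (μ k : ℤ) - (k + 1) ≤ (ν j : ℤ) - (j + 1))).card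

/-- `ρ(μ,ν)_j = ν_j − j + 1 + #{k : 1 ≤ k ≤ n, μ_k − k > ν_j − j}`, 0-indexed. -/
def rhoStar (n : ℕ) (μ ν : ℕ → ℕ) (j : ℕ) : ℤ :=
  (ν j : ℤ) - (j + 1) + 1 +
    ((Finset.range n).filter (fun k => (ν j : ℤ) - (j + 1) < (μ k : ℤ) - (k + 1))).card

/-- `λ(μ,ν)` as a sequence of natural numbers. -/
def lamStarN (n : ℕ) (μ ν : ℕ → ℕ) (k : ℕ) : ℕ := (lamStar n μ ν k).toNat

/-- `ρ(μ,ν)` as a sequence of natural numbers. -/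
def rhoStarN (n : ℕ) (μ ν : ℕ → ℕ) (k : ℕ) : ℕ := (rhoStar n μ ν k).toNat

/-- The conjugate partition: `μ′_i = #{k : μ_k ≥ i}` (1-indexed), recorded 0-indexed. -/
noncomputable def conjP (μ : ℕ → ℕ) (i : ℕ) : ℕ := {k : ℕ | i + 1 ≤ μ k}.ncard

/-- Remove a full column of height `k`: subtract 1 from the first `k` parts. -/
def removeCol (k : ℕ) (σ : ℕ → ℕ) : ℕ → ℕ := fun j => if j < k then σ j - 1 else σ j

/-- An LR filling of the skew shape `θ/ν` of type `μ` (all 0-indexed; cell `(i,j)`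
is row `i+1`, column `j+1`; the entry `0` marks cells outside the skew shape).
Rows weakly increase, columns strictly increase, the entry `m+1` occurs `μ m`
times, and the reverse reading word (rows top to bottom, each row right to left)
is a lattice permutation. It is required that `ν ⊆ θ`. -/
def IsLRFilling (θ ν μ : ℕ → ℕ) (T : ℕ → ℕ → ℕ) : Prop :=
  (∀ i, ν i ≤ θ i) ∧
  (∀ i j, ν i ≤ j → j < θ i → 1 ≤ T i j) ∧
  (∀ i j, ¬(ν i ≤ j ∧ j < θ i) → T i j = 0) ∧
  (∀ i j j', ν i ≤ j → j ≤ j' → j' < θ i → T i j ≤ T i j') ∧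
  (∀ i i' j, i < i' → ν i ≤ j → j < θ i → ν i' ≤ j → j < θ i' → T i j < T i' j) ∧
  (∀ m : ℕ, {p : ℕ × ℕ | T p.1 p.2 = m + 1}.ncard = μ m) ∧
  (∀ m i j : ℕ,
    {p : ℕ × ℕ | T p.1 p.2 = m + 2 ∧ (p.1 < i ∨ (p.1 = i ∧ j ≤ p.2))}.ncard ≤
    {p : ℕ × ℕ | T p.1 p.2 = m + 1 ∧ (p.1 < i ∨ (p.1 = i ∧ j ≤ p.2))}.ncard)

/-- The Littlewood–Richardson coefficient `c_{μν}^θ`: the number of LR fillings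
of `θ/ν` of type `μ` (equal to `0` when `ν ⊄ θ`). -/
noncomputable def lrCoeff (μ ν θ : ℕ → ℕ) : ℕ := Nat.card {T : ℕ → ℕ → ℕ // IsLRFilling θ ν μ T}


/-! In the shifted coordinates `a_k = μ_k − k`, `b_j = ν_j − j` (strictly decreasing), both
parts of the image are values of one map `x ↦ x + #{j < n : x ≤ c_j}`: `λ_k` is its value
at `a_k` for `c = b`, and `ρ_j` its value at `b_j + 1` for `c = a`. This map is monotone when
`c` is injective, since between `x` and `y` there are at most `y − x` of the `c_j`, which gives
both monotonicity claims. For the sizes, every pair `(k, j)` is counted exactly once, either in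
`λ_k` (when `a_k ≤ b_j`) or in `ρ_j` (when `b_j < a_k`); the `n²` so obtained cancels the
shifts `−k`, `−j` and the `+1`s. -/

open Finset

/-- `μ_k − k` in the 1-indexed notation of the paper. -/
def shiftedParts (μ : ℕ → ℕ) (k : ℕ) : ℤ := (μ k : ℤ) - (k + 1)

def addCountGe (n : ℕ) (c : ℕ → ℤ) (x : ℤ) : ℤ := x + #{j ∈ range n | x ≤ c j}

theorem strictAnti_shiftedParts {μ : ℕ → ℕ} (hμ : Antitone μ) : StrictAnti (shiftedParts μ) :=
  strictAnti_nat_of_succ_lt fun k => by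
    have := hμ (Nat.le_add_right k 1)
    simp only [shiftedParts]
    push_cast
    omega

theorem neg_succ_le_shiftedParts (μ : ℕ → ℕ) (k : ℕ) : -((k : ℤ) + 1) ≤ shiftedParts μ k := by
  simp only [shiftedParts]
  omega

theorem lamStar_eq_addCountGe (n : ℕ) (μ ν : ℕ → ℕ) (k : ℕ) :
    lamStar n μ ν k = addCountGe n (shiftedParts ν) (shiftedParts μ k) :=
  rfl

theorem rhoStar_eq_addCountGe (n : ℕ) (μ ν : ℕ → ℕ) (j : ℕ) :
    rhoStar n μ ν j = addCountGe n (shiftedParts μ) (shiftedParts ν j + 1) :=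
  -- on `ℤ`, `x < y` is by definition `x + 1 ≤ y`, decidability instance included
  rfl

theorem card_filter_mem_Ico_le {c : ℕ → ℤ} (hc : Function.Injective c) (n : ℕ) {x y : ℤ}
    (hxy : x ≤ y) : (#{j ∈ range n | x ≤ c j ∧ c j < y} : ℤ) ≤ y - x := by
  have hcard : #{j ∈ range n | x ≤ c j ∧ c j < y} ≤ #(Ico x y) :=
    card_le_card_of_injOn c (fun j hj => by simpa using (mem_filter.mp hj).2) hc.injOn
  rw [Int.card_Ico] at hcard
  omega

theorem addCountGe_mono {c : ℕ → ℤ} (hc : Function.Injective c) (n : ℕ) :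
    Monotone (addCountGe n c) := by
  intro x y hxy
  have hsplit : #{j ∈ range n | x ≤ c j} ≤ #{j ∈ range n | y ≤ c j} +
      #{j ∈ range n | x ≤ c j ∧ c j < y} := by
    refine (card_le_card fun j hj => ?_).trans (card_union_le _ _)
    simp only [mem_filter, mem_union] at hj ⊢
    by_cases hyj : y ≤ c j
    · exact Or.inl ⟨hj.1, hyj⟩
    · exact Or.inr ⟨hj.1, hj.2, not_le.mp hyj⟩
  have := card_filter_mem_Ico_le hc n hxy
  simp only [addCountGe]
  omega

theorem addCountGe_nonneg {c : ℕ → ℤ} (hc : ∀ j : ℕ, -((j : ℤ) + 1) ≤ c j) {n : ℕ} {x : ℤ}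
    (hx : -(n : ℤ) ≤ x) : 0 ≤ addCountGe n c x := by
  -- the indices `j < -x` all lie in the filter, because `c j ≥ -(j + 1) ≥ x` there
  have hsub : range (-x).toNat ⊆ {j ∈ range n | x ≤ c j} := by
    intro j hj
    have := hc j
    simp only [mem_range, mem_filter] at hj ⊢
    omega
  have := card_le_card hsub
  simp only [card_range] at this
  simp only [addCountGe]
  omega

theorem sum_card_filter_add_sum_card_filter_not {ι κ : Type*} (s : Finset ι) (t : Finset κ)
    (r : ι → κ → Prop) [∀ i j, Decidable (r i j)] :
    ∑ i ∈ s, #{j ∈ t | r i j} + ∑ j ∈ t, #{i ∈ s | ¬r i j} = #s * #t := by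
  have hswap := sum_card_bipartiteAbove_eq_sum_card_bipartiteBelow (s := s) (t := t)
    (r := fun i j => ¬r i j)
  simp only [bipartiteAbove, bipartiteBelow] at hswap
  rw [← hswap, ← sum_add_distrib, sum_const_nat fun i _ => card_filter_add_card_filter_not _]

theorem sum_addCountGe_add_sum_addCountGe (n : ℕ) (a b : ℕ → ℤ) :
    ∑ k ∈ range n, addCountGe n b (a k) + ∑ j ∈ range n, addCountGe n a (b j + 1) =
      ∑ k ∈ range n, a k + ∑ j ∈ range n, b j + n + n * n := by
  have hpairs := sum_card_filter_add_sum_card_filter_not (range n) (range n)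
    (fun k j => a k ≤ b j)
  simp only [not_le, card_range] at hpairs
  simp only [addCountGe, ← Int.lt_iff_add_one_le, sum_add_distrib, sum_const, card_range,
    nsmul_eq_mul, mul_one]
  have : ((∑ k ∈ range n, #{j ∈ range n | a k ≤ b j} +
      ∑ j ∈ range n, #{k ∈ range n | b j < a k} : ℕ) : ℤ) = n * n := by
    exact_mod_cast hpairs
  push_cast at this
  linarith

theorem two_mul_sum_range_succ (n : ℕ) :
    2 * ∑ k ∈ range n, ((k : ℤ) + 1) = n * n + n := by
  induction n with
  | zero => simp
  | succ m ih =>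
    rw [sum_range_succ]
    push_cast
    linarith

/-- The image `(λ,ρ)` of a pair `(μ,ν)` of partitions with `n` parts under the
`*`-operation again consists of two partitions with `n` parts, and
`|λ| + |ρ| = |μ| + |ν|`. -/
theorem star_image_is_partition_pair (n : ℕ) (μ ν : ℕ → ℕ)
    (hμ : IsPartitionN n μ) (hν : IsPartitionN n ν) :
    (∀ k, k < n → 0 ≤ lamStar n μ ν k) ∧
    (∀ i j, i ≤ j → j < n → lamStar n μ ν j ≤ lamStar n μ ν i) ∧
    (∀ k, k < n → 0 ≤ rhoStar n μ ν k) ∧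
    (∀ i j, i ≤ j → j < n → rhoStar n μ ν j ≤ rhoStar n μ ν i) ∧
    ((∑ k ∈ Finset.range n, lamStar n μ ν k) + ∑ k ∈ Finset.range n, rhoStar n μ ν k)
      = (∑ k ∈ Finset.range n, (μ k : ℤ)) + ∑ k ∈ Finset.range n, (ν k : ℤ) := by
  have ha := strictAnti_shiftedParts hμ.1
  have hb := strictAnti_shiftedParts hν.1
  simp only [lamStar_eq_addCountGe, rhoStar_eq_addCountGe]
  refine ⟨fun k hk => ?_, fun i j hij _ => ?_, fun j hj => ?_, fun i j hij _ => ?_, ?_⟩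
  · exact addCountGe_nonneg (neg_succ_le_shiftedParts ν) (by simp only [shiftedParts]; omega)
  · exact addCountGe_mono hb.injective n (ha.antitone hij)
  · exact addCountGe_nonneg (neg_succ_le_shiftedParts μ) (by simp only [shiftedParts]; omega)
  · exact addCountGe_mono ha.injective n (by linarith [hb.antitone hij])
  · rw [sum_addCountGe_add_sum_addCountGe]
    simp only [shiftedParts, sum_sub_distrib]
    linarith [two_mul_sum_range_succ n]
end

section
/- (Reduction of the bounded-height case to finitely many pairs.) Let p be a positive integer and let ν be a fixed partition with at most p nonzero parts. Suppose that for every partition α with at most p nonzero parts and largest part α_1 ≤ p(ν_1 + p), and for every partition θ, one has c_{αν}^θ ≤ c_{λ(α,ν)ρ(α,ν)}^θ. Then for every partition μ with at most p nonzero parts and every partition θ, one has c_{μν}^θ ≤ c_{λ(μ,ν)ρ(μ,ν)}^θ. -/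
/-!
Induct on `μ₁`. If `μ₁ > p (ν₁ + p)`, then `μ_t - μ_{t+1} > ν₁ + p` for some `t ≤ p`. In an LR
filling of `θ/ν` of type `μ`, every row `i ≤ t` reaches beyond column `ν₁`, and beyond it carries
only the entry `i`; so `θ_t > θ_{t+1}` and erasing the last cell of each of the first `t` rows gives
an LR filling of `θ'/ν` of type `μ'`, where `'` removes a column of height `t`. Hence
`c_{μν}^θ ≤ c_{μ'ν}^{θ'}`. The same gap makes the `*`-operation commute with the column removal,
`λ(μ',ν) = λ(μ,ν)'` and `ρ(μ',ν) = ρ(μ,ν)`, and conversely writing `i` at the end of each row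
`i ≤ t` turns an LR filling of `θ'/ρ` of type `λ'` into one of `θ/ρ` of type `λ`, so
`c_{λ'ρ}^{θ'} ≤ c_{λρ}^θ`. Chaining these with the induction hypothesis for `μ'` proves the claim.
-/

theorem lt_removeCol_iff {t : ℕ} {σ : ℕ → ℕ} {i j : ℕ} :
    j < removeCol t σ i ↔ j < σ i ∧ ¬(i < t ∧ j = σ i - 1) := by
  unfold removeCol
  split_ifs <;> omega

theorem removeCol_le (t : ℕ) (σ : ℕ → ℕ) (i : ℕ) : removeCol t σ i ≤ σ i := by
  unfold removeCol
  split_ifs <;> omega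

theorem Antitone.removeCol {σ : ℕ → ℕ} {k : ℕ} (hσ : Antitone σ) (hk : σ (k + 1) < σ k) :
    Antitone (removeCol (k + 1) σ) := by
  refine antitone_nat_of_succ_le fun i => ?_
  have : σ (i + 1) ≤ σ i := hσ (Nat.le_succ i)
  unfold _root_.removeCol
  obtain rfl | hik := eq_or_ne i k <;> split_ifs <;> omega

theorem IsPartitionN.removeCol {n k : ℕ} {σ : ℕ → ℕ} (hσ : IsPartitionN n σ)
    (hk : σ (k + 1) < σ k) : IsPartitionN n (removeCol (k + 1) σ) :=
  ⟨hσ.1.removeCol hk, fun i hi => by unfold _root_.removeCol; simp [hσ.2 i hi]⟩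

theorem IsPartition.removeCol {k : ℕ} {σ : ℕ → ℕ} (hσ : IsPartition σ)
    (hk : σ (k + 1) < σ k) : IsPartition (removeCol (k + 1) σ) := by
  obtain ⟨N, hN⟩ := hσ.2
  exact ⟨hσ.1.removeCol hk, N, fun i hi => by unfold _root_.removeCol; simp [hN i hi]⟩

theorem exists_succ_add_lt_of_mul_lt {μ : ℕ → ℕ} {n d : ℕ} (hn : μ n = 0) (h : n * d < μ 0) :
    ∃ k < n, μ (k + 1) + d < μ k := by
  by_contra! hc
  have telescope : ∀ m ≤ n, μ 0 ≤ μ m + m * d := by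
    intro m
    induction m with
    | zero => simp
    | succ m ih =>
      intro hm
      have := ih (by omega)
      have := hc m (by omega)
      rw [Nat.succ_mul]
      omega
  have := telescope n le_rfl
  omega

theorem not_rowEnd_of_lt {θ : ℕ → ℕ} {k i i' j : ℕ} (hθ : Antitone θ) (hθk : θ (k + 1) < θ k)
    (hii : i < i') (hj : j < θ i') (he' : ¬(i' < k + 1 ∧ j = θ i' - 1)) :
    ¬(i < k + 1 ∧ j = θ i - 1) := by
  rintro ⟨hi, rfl⟩
  have := hθ hii.le
  by_cases hi' : i' < k + 1
  · omega
  · have := hθ (show k + 1 ≤ i' by omega)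
    have := hθ (show i ≤ k by omega)
    omega

namespace IsLRFilling

variable {θ ν μ : ℕ → ℕ} {T : ℕ → ℕ → ℕ}

theorem mem_of_ne_zero (hT : IsLRFilling θ ν μ T) {i j : ℕ} (h : T i j ≠ 0) :
    ν i ≤ j ∧ j < θ i := by
  by_contra hc
  exact h (hT.2.2.1 i j hc)

theorem finite_level (hθ : IsPartition θ) (hT : IsLRFilling θ ν μ T) {v : ℕ} (hv : v ≠ 0) :
    {p : ℕ × ℕ | T p.1 p.2 = v}.Finite := by
  obtain ⟨hθa, N, hN⟩ := hθ
  refine (Finset.range N ×ˢ Finset.range (θ 0) : Finset (ℕ × ℕ)).finite_toSet.subset ?_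
  rintro ⟨i, j⟩ (h : T i j = v)
  obtain ⟨-, hj⟩ := hT.mem_of_ne_zero (h ▸ hv)
  have hi : i < N := by
    by_contra hi
    rw [hN i (not_lt.mp hi)] at hj
    omega
  simpa [hi] using hj.trans_le (hθa (Nat.zero_le i))

theorem apply_le_succ (hθ : IsPartition θ) (hT : IsLRFilling θ ν μ T) (i j : ℕ) :
    T i j ≤ i + 1 := by
  suffices h : ∀ m i j, T i j = m + 1 → m ≤ i by
    have := h (T i j - 1) i j
    omega
  intro m
  induction m with
  | zero => intros; omega
  | succ m ih =>
    intro i j hij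
    -- the lattice condition at `(i, j)` yields an `m + 1` read no later than this `m + 2`
    have hA : 0 < {p : ℕ × ℕ | T p.1 p.2 = m + 2 ∧ (p.1 < i ∨ (p.1 = i ∧ j ≤ p.2))}.ncard :=
      (Set.ncard_pos ((hT.finite_level hθ (by omega)).subset fun _ hp => hp.1)).2
        ⟨(i, j), hij, Or.inr ⟨rfl, le_rfl⟩⟩
    obtain ⟨⟨i', j'⟩, hv : T i' j' = m + 1, hlt | ⟨rfl : i' = i, hjj⟩⟩ :=
      Set.nonempty_of_ncard_ne_zero (hA.trans_le (hT.2.2.2.2.2.2 m i j)).ne'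
    · have := ih i' j' hv
      omega
    · have h1 := hT.mem_of_ne_zero (i := i') (j := j) (by omega)
      have h2 := hT.mem_of_ne_zero (i := i') (j := j') (by omega)
      have := hT.2.2.2.1 i' j j' h1.1 hjj h2.2
      omega

theorem apply_eq_succ (hθ : IsPartition θ) (hν : Antitone ν) (hT : IsLRFilling θ ν μ T)
    {i j : ℕ} (hj : ν 0 ≤ j) (hjθ : j < θ i) : T i j = i + 1 := by
  refine le_antisymm (hT.apply_le_succ hθ i j) ?_
  induction i with
  | zero => exact hT.2.1 0 j hj hjθ
  | succ i ih =>
    have hjθ' : j < θ i := hjθ.trans_le (hθ.1 i.le_succ)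
    have := hT.2.2.2.2.1 i (i + 1) j i.lt_succ_self ((hν (Nat.zero_le i)).trans hj) hjθ'
      ((hν (Nat.zero_le _)).trans hj) hjθ
    have := ih hjθ'
    omega

theorem content_le_shape (hθ : IsPartition θ) (hT : IsLRFilling θ ν μ T) (k : ℕ) :
    μ k ≤ θ k := by
  -- the entries `k + 1` lie in rows `≥ k` and, by column strictness, in distinct columns
  calc μ k = {p : ℕ × ℕ | T p.1 p.2 = k + 1}.ncard := (hT.2.2.2.2.2.1 k).symm
    _ ≤ (Finset.range (θ k) : Set ℕ).ncard := by
      refine Set.ncard_le_ncard_of_injOn Prod.snd ?_ ?_ (Finset.finite_toSet _)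
      · rintro ⟨i, j⟩ (h : T i j = k + 1)
        have := hT.apply_le_succ hθ i j
        simpa using (hT.mem_of_ne_zero (by omega : T i j ≠ 0)).2.trans_le (hθ.1 (by omega))
      · rintro ⟨i, j⟩ (h : T i j = k + 1) ⟨i', j'⟩ (h' : T i' j' = k + 1) (hjj : j = j')
        subst hjj
        have hm := hT.mem_of_ne_zero (by omega : T i j ≠ 0)
        have hm' := hT.mem_of_ne_zero (by omega : T i' j ≠ 0)
        rcases lt_trichotomy i i' with hii | rfl | hii
        · have := hT.2.2.2.2.1 i i' j hii hm.1 hm.2 hm'.1 hm'.2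
          omega
        · rfl
        · have := hT.2.2.2.2.1 i' i j hii hm'.1 hm'.2 hm.1 hm.2
          omega
    _ = θ k := by simp

theorem shape_sub_le_ncard (hθ : IsPartition θ) (hν : Antitone ν) (hT : IsLRFilling θ ν μ T)
    (k : ℕ) {P : ℕ × ℕ → Prop} (hP : ∀ j, P (k, j)) :
    θ k - ν 0 ≤ {p : ℕ × ℕ | T p.1 p.2 = k + 1 ∧ P p}.ncard := by
  have hsub : (({k} ×ˢ Finset.Ico (ν 0) (θ k) : Finset (ℕ × ℕ)) : Set (ℕ × ℕ)) ⊆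
      {p : ℕ × ℕ | T p.1 p.2 = k + 1 ∧ P p} := by
    rintro ⟨i, j⟩ hp
    simp only [Finset.coe_product, Finset.coe_singleton, Finset.coe_Ico, Set.mem_prod,
      Set.mem_singleton_iff, Set.mem_Ico] at hp
    obtain ⟨rfl, hj, hjθ⟩ := hp
    exact ⟨hT.apply_eq_succ hθ hν hj hjθ, hP j⟩
  have := Set.ncard_le_ncard hsub
    ((hT.finite_level hθ k.succ_ne_zero).subset fun _ hp => hp.1)
  rw [Set.ncard_coe_finset] at this
  simpa using this

theorem shape_le_content_add (hθ : IsPartition θ) (hν : Antitone ν) (hT : IsLRFilling θ ν μ T)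
    (k : ℕ) : θ k ≤ μ k + ν 0 := by
  have := hT.shape_sub_le_ncard hθ hν k (P := fun _ => True) fun _ => trivial
  simp only [and_true, hT.2.2.2.2.2.1 k] at this
  omega

theorem shape_succ_lt (hθ : IsPartition θ) (hν : Antitone ν) (hT : IsLRFilling θ ν μ T) {k : ℕ}
    (hgap : μ (k + 1) + ν 0 < μ k) : θ (k + 1) < θ k := by
  have := hT.shape_le_content_add hθ hν (k + 1)
  have := hT.content_le_shape hθ k
  omega

end IsLRFilling

theorem finite_isLRFilling {θ ν μ : ℕ → ℕ} (hθ : IsPartition θ) :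
    Finite {T : ℕ → ℕ → ℕ // IsLRFilling θ ν μ T} := by
  obtain ⟨hθa, N, hN⟩ := id hθ
  -- a filling is determined by its entries, all `≤ N + 1`, in the box `N × θ 0`
  have hbox : ∀ (T : {T : ℕ → ℕ → ℕ // IsLRFilling θ ν μ T}) i j,
      ¬(i < N ∧ j < θ 0) → T.1 i j = 0 := by
    intro T i j hij
    by_contra h
    obtain ⟨-, hj⟩ := T.2.mem_of_ne_zero h
    rcases Nat.lt_or_ge i N with hi | hi
    · exact hij ⟨hi, hj.trans_le (hθa (Nat.zero_le i))⟩
    · rw [hN i hi] at hj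
      omega
  refine Finite.of_injective (fun T (i : Fin N) (j : Fin (θ 0)) =>
    (⟨T.1 i j, by have := T.2.apply_le_succ hθ i j; omega⟩ : Fin (N + 2))) ?_
  intro T T' h
  ext i j
  by_cases hij : i < N ∧ j < θ 0
  · simpa using congrArg Fin.val (congrFun (congrFun h ⟨i, hij.1⟩) ⟨j, hij.2⟩)
  · rw [hbox T i j hij, hbox T' i j hij]

def fillColumn (t : ℕ) (θ : ℕ → ℕ) (S : ℕ → ℕ → ℕ) (i j : ℕ) : ℕ :=
  if i < t ∧ j = θ i - 1 then i + 1 else S i j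

def eraseColumn (t : ℕ) (θ : ℕ → ℕ) (T : ℕ → ℕ → ℕ) (i j : ℕ) : ℕ :=
  if i < t ∧ j = θ i - 1 then 0 else T i j

section Column

variable {t : ℕ} {θ : ℕ → ℕ} {S T : ℕ → ℕ → ℕ}

theorem fillColumn_of_lt {i j : ℕ} (h : i < t ∧ j = θ i - 1) : fillColumn t θ S i j = i + 1 :=
  if_pos h

theorem fillColumn_of_not {i j : ℕ} (h : ¬(i < t ∧ j = θ i - 1)) :
    fillColumn t θ S i j = S i j :=
  if_neg h

theorem fillColumn_eraseColumn (hT : ∀ i < t, T i (θ i - 1) = i + 1) :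
    fillColumn t θ (eraseColumn t θ T) = T := by
  funext i j
  by_cases h : i < t ∧ j = θ i - 1
  · rw [fillColumn_of_lt h, h.2, hT i h.1]
  · rw [fillColumn_of_not h, eraseColumn, if_neg h]

theorem eraseColumn_fillColumn (hS : ∀ i < t, S i (θ i - 1) = 0) :
    eraseColumn t θ (fillColumn t θ S) = S := by
  funext i j
  by_cases h : i < t ∧ j = θ i - 1
  · rw [eraseColumn, if_pos h, h.2, hS i h.1]
  · rw [eraseColumn, if_neg h, fillColumn_of_not h]

theorem fillColumn_eq_succ_iff (hS : ∀ i < t, S i (θ i - 1) = 0) {i j m : ℕ} :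
    fillColumn t θ S i j = m + 1 ↔ S i j = m + 1 ∨ (i = m ∧ m < t ∧ j = θ m - 1) := by
  by_cases h : i < t ∧ j = θ i - 1
  · obtain ⟨hi, rfl⟩ := h
    rw [fillColumn_of_lt ⟨hi, rfl⟩, hS i hi]
    constructor
    · rintro ⟨⟩
      exact Or.inr ⟨rfl, hi, rfl⟩
    · rintro (h | ⟨rfl, -, -⟩) <;> omega
  · rw [fillColumn_of_not h]
    refine ⟨Or.inl, ?_⟩
    rintro (h' | ⟨rfl, hm, rfl⟩)
    · exact h'
    · exact absurd ⟨hm, rfl⟩ h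

theorem ncard_fillColumn_level (hS : ∀ i < t, S i (θ i - 1) = 0) {m : ℕ}
    (hfin : {p : ℕ × ℕ | S p.1 p.2 = m + 1}.Finite) (P : ℕ × ℕ → Prop) [DecidablePred P] :
    {p : ℕ × ℕ | fillColumn t θ S p.1 p.2 = m + 1 ∧ P p}.ncard =
      {p : ℕ × ℕ | S p.1 p.2 = m + 1 ∧ P p}.ncard + if m < t ∧ P (m, θ m - 1) then 1 else 0 := by
  simp only [fillColumn_eq_succ_iff hS]
  split_ifs with h
  · have hnot : (m, θ m - 1) ∉ {p : ℕ × ℕ | S p.1 p.2 = m + 1 ∧ P p} := by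
      rintro ⟨hv, -⟩
      have := hS m h.1
      simp only at hv
      omega
    rw [← Set.ncard_insert_of_notMem hnot (hfin.subset fun _ hp => hp.1)]
    congr 1
    ext ⟨i, j⟩
    simp only [Set.mem_ofPred_eq, Set.mem_insert_iff, Prod.mk.injEq]
    constructor
    · rintro ⟨hv | ⟨rfl, -, rfl⟩, hP⟩
      · exact Or.inr ⟨hv, hP⟩
      · exact Or.inl ⟨rfl, rfl⟩
    · rintro (⟨rfl, rfl⟩ | ⟨hv, hP⟩)
      · exact ⟨Or.inr ⟨rfl, h.1, rfl⟩, h.2⟩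
      · exact ⟨Or.inl hv, hP⟩
  · rw [add_zero]
    congr 1
    ext ⟨i, j⟩
    simp only [Set.mem_ofPred_eq]
    constructor
    · rintro ⟨hv | ⟨rfl, hm, rfl⟩, hP⟩
      · exact ⟨hv, hP⟩
      · exact absurd ⟨hm, hP⟩ h
    · rintro ⟨hv, hP⟩
      exact ⟨Or.inl hv, hP⟩

theorem ncard_fillColumn_content (hS : ∀ i < t, S i (θ i - 1) = 0) {m : ℕ}
    (hfin : {p : ℕ × ℕ | S p.1 p.2 = m + 1}.Finite) :
    {p : ℕ × ℕ | fillColumn t θ S p.1 p.2 = m + 1}.ncard =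
      {p : ℕ × ℕ | S p.1 p.2 = m + 1}.ncard + if m < t then 1 else 0 := by
  simpa using ncard_fillColumn_level (θ := θ) hS hfin fun _ => True

theorem fillColumn_le_succ (hS : ∀ i j, S i j ≤ i + 1) (i j : ℕ) :
    fillColumn t θ S i j ≤ i + 1 := by
  unfold fillColumn
  split_ifs
  · rfl
  · exact hS i j

-- The lattice-word condition of `IsLRFilling`.
def IsLatticeReading (T : ℕ → ℕ → ℕ) : Prop :=
  ∀ m i j : ℕ,
    {p : ℕ × ℕ | T p.1 p.2 = m + 2 ∧ (p.1 < i ∨ (p.1 = i ∧ j ≤ p.2))}.ncard ≤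
    {p : ℕ × ℕ | T p.1 p.2 = m + 1 ∧ (p.1 < i ∨ (p.1 = i ∧ j ≤ p.2))}.ncard

theorem IsLatticeReading.fillColumn (hS0 : ∀ i < t, S i (θ i - 1) = 0)
    (hfin : ∀ m, {p : ℕ × ℕ | S p.1 p.2 = m + 1}.Finite) (hS : IsLatticeReading S) :
    IsLatticeReading (fillColumn t θ S) := by
  intro m i j
  have hA := ncard_fillColumn_level (θ := θ) hS0 (hfin (m + 1))
    (fun p => p.1 < i ∨ (p.1 = i ∧ j ≤ p.2))
  have hB := ncard_fillColumn_level (θ := θ) hS0 (hfin m) (fun p => p.1 < i ∨ (p.1 = i ∧ j ≤ p.2))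
  dsimp only at hA hB
  rw [show m + 1 + 1 = m + 2 from rfl] at hA
  rw [hA, hB]
  have := hS m i j
  -- the `m + 1` written into row `m` is read before the `m + 2` written into row `m + 1`
  split_ifs <;> omega

end Column

namespace IsLRFilling

variable {k : ℕ} {θ ν μ : ℕ → ℕ} {S T : ℕ → ℕ → ℕ}

theorem apply_removed {t : ℕ} (hS : IsLRFilling (removeCol t θ) ν μ S) :
    ∀ i < t, S i (θ i - 1) = 0 :=
  fun i hi => hS.2.2.1 i _ fun h => (lt_removeCol_iff.1 h.2).2 ⟨hi, rfl⟩

theorem nu_zero_lt_shape (hθ : IsPartition θ) (hμ : Antitone μ) (hT : IsLRFilling θ ν μ T)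
    (h : ν 0 < μ k) : ∀ i ≤ k, ν 0 < θ i :=
  fun i hi => (h.trans_le (hμ hi)).trans_le (hT.content_le_shape hθ i)

theorem apply_rowEnd (hθ : IsPartition θ) (hν : Antitone ν) (hμ : Antitone μ)
    (hT : IsLRFilling θ ν μ T) (h : ν 0 < μ k) : ∀ i < k + 1, T i (θ i - 1) = i + 1 := by
  intro i hi
  have := hT.nu_zero_lt_shape hθ hμ h i (by omega)
  exact hT.apply_eq_succ hθ hν (by omega) (by omega)

-- In the erasing direction this is the one case where the lattice inequality for the erased filling
-- does not follow from that for the original one.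
theorem ncard_prefix_lt (hθ : IsPartition θ) (hν : Antitone ν) (hμ : Antitone μ)
    (hT : IsLRFilling θ ν μ T) (hgap : μ (k + 1) + ν 0 < μ k) {m i j : ℕ} (hm : m ≤ k)
    (hin : m < i ∨ (m = i ∧ j ≤ θ m - 1))
    (hout : ¬(m + 1 < k + 1 ∧ (m + 1 < i ∨ (m + 1 = i ∧ j ≤ θ (m + 1) - 1)))) :
    {p : ℕ × ℕ | T p.1 p.2 = m + 2 ∧ (p.1 < i ∨ (p.1 = i ∧ j ≤ p.2))}.ncard <
      {p : ℕ × ℕ | T p.1 p.2 = m + 1 ∧ (p.1 < i ∨ (p.1 = i ∧ j ≤ p.2))}.ncard := by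
  have hθm := hT.nu_zero_lt_shape hθ hμ (by omega) m hm
  by_cases hnone : i ≤ m ∨ (i = m + 1 ∧ θ (m + 1) ≤ j)
  · -- no `m + 2` (found only in rows `> m`) is read by then, but the `m + 1` at `(m, θ m - 1)` is
    have hA : {p : ℕ × ℕ | T p.1 p.2 = m + 2 ∧ (p.1 < i ∨ (p.1 = i ∧ j ≤ p.2))} = ∅ := by
      refine Set.eq_empty_of_forall_notMem ?_
      rintro ⟨a, b⟩ ⟨hv : T a b = m + 2, hpre⟩
      have := hT.apply_le_succ hθ a b
      have hb := (hT.mem_of_ne_zero (by omega : T a b ≠ 0)).2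
      obtain rfl : a = m + 1 := by omega
      omega
    rw [hA, Set.ncard_empty,
      Set.ncard_pos ((hT.finite_level hθ m.succ_ne_zero).subset fun _ hp => hp.1)]
    exact ⟨(m, θ m - 1), hT.apply_eq_succ hθ hν (i := m) (by omega) (by omega), hin⟩
  · -- otherwise `m = k`, and all of row `k`, which is full of `k + 1`s, is read by then
    obtain rfl : m = k := by omega
    have hA : {p : ℕ × ℕ | T p.1 p.2 = m + 2 ∧ (p.1 < i ∨ (p.1 = i ∧ j ≤ p.2))}.ncard ≤
        μ (m + 1) := by
      rw [← hT.2.2.2.2.2.1 (m + 1)]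
      exact Set.ncard_le_ncard (fun _ hp => hp.1) (hT.finite_level hθ (m + 1).succ_ne_zero)
    have hB := hT.shape_sub_le_ncard hθ hν m
      (P := fun p => p.1 < i ∨ (p.1 = i ∧ j ≤ p.2)) fun _ => Or.inl (by omega)
    have := hT.content_le_shape hθ m
    omega

theorem finite_level_of_fillColumn {t : ℕ} (hθ : IsPartition θ)
    (hS0 : ∀ i < t, S i (θ i - 1) = 0) (hT : IsLRFilling θ ν μ (_root_.fillColumn t θ S)) (m : ℕ) :
    {p : ℕ × ℕ | S p.1 p.2 = m + 1}.Finite :=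
  (hT.finite_level hθ m.succ_ne_zero).subset fun _ hp => (fillColumn_eq_succ_iff hS0).2 (Or.inl hp)

theorem isLatticeReading_of_fillColumn (hθ : IsPartition θ) (hν : Antitone ν) (hμ : Antitone μ)
    (hgap : μ (k + 1) + ν 0 < μ k) (hS0 : ∀ i < k + 1, S i (θ i - 1) = 0)
    (hT : IsLRFilling θ ν μ (_root_.fillColumn (k + 1) θ S)) : IsLatticeReading S := by
  intro m i j
  have hfin := hT.finite_level_of_fillColumn hθ hS0
  have hA := ncard_fillColumn_level (θ := θ) hS0 (hfin (m + 1))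
    (fun p => p.1 < i ∨ (p.1 = i ∧ j ≤ p.2))
  have hB := ncard_fillColumn_level (θ := θ) hS0 (hfin m) (fun p => p.1 < i ∨ (p.1 = i ∧ j ≤ p.2))
  dsimp only at hA hB
  rw [show m + 1 + 1 = m + 2 from rfl] at hA
  have hlat := hT.2.2.2.2.2.2 m i j
  rw [hA, hB] at hlat
  by_cases hard : (m < k + 1 ∧ (m < i ∨ (m = i ∧ j ≤ θ m - 1))) ∧
      ¬(m + 1 < k + 1 ∧ (m + 1 < i ∨ (m + 1 = i ∧ j ≤ θ (m + 1) - 1)))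
  · have hlt := hT.ncard_prefix_lt hθ hν hμ hgap (by omega) hard.1.2 hard.2
    rw [hA, hB, if_pos hard.1, if_neg hard.2] at hlt
    omega
  · split_ifs at hlat <;> omega

theorem fillColumn (hθ : Antitone θ) (hθ' : IsPartition (removeCol (k + 1) θ))
    (hθk : θ (k + 1) < θ k) (hμ : ∀ i ≤ k, 0 < μ i)
    (hS : IsLRFilling (removeCol (k + 1) θ) ν (removeCol (k + 1) μ) S) :
    IsLRFilling θ ν μ (_root_.fillColumn (k + 1) θ S) := by
  have hS0 := hS.apply_removed
  have hle := fillColumn_le_succ (t := k + 1) (θ := θ) (hS.apply_le_succ hθ')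
  have hend : ∀ i < k + 1, ν i < θ i := fun i hi => by
    have hν := hS.1 i
    have := hθ (show i ≤ k by omega)
    unfold removeCol at hν
    rw [if_pos hi] at hν
    omega
  have hin : ∀ {i j}, j < θ i → ¬(i < k + 1 ∧ j = θ i - 1) → j < removeCol (k + 1) θ i :=
    fun h1 h2 => lt_removeCol_iff.2 ⟨h1, h2⟩
  refine ⟨fun i => (hS.1 i).trans (removeCol_le _ _ i), fun i j h1 h2 => ?_, fun i j hout => ?_,
    fun i j j' h1 hjj h3 => ?_, fun i i' j hii h1 h2 h3 h4 => ?_, fun m => ?_, ?_⟩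
  · by_cases he : i < k + 1 ∧ j = θ i - 1
    · rw [fillColumn_of_lt he]
      omega
    · rw [fillColumn_of_not he]
      exact hS.2.1 i j h1 (hin h2 he)
  · have he : ¬(i < k + 1 ∧ j = θ i - 1) := fun he => hout (by have := hend i he.1; omega)
    rw [fillColumn_of_not he]
    exact hS.2.2.1 i j fun h => hout ⟨h.1, (lt_removeCol_iff.1 h.2).1⟩
  · by_cases he' : i < k + 1 ∧ j' = θ i - 1
    · rw [fillColumn_of_lt he']
      exact hle i j
    · have he : ¬(i < k + 1 ∧ j = θ i - 1) := by omega
      rw [fillColumn_of_not he, fillColumn_of_not he']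
      exact hS.2.2.2.1 i j j' h1 hjj (hin h3 he')
  · by_cases he' : i' < k + 1 ∧ j = θ i' - 1
    · rw [fillColumn_of_lt he']
      have := hle i j
      omega
    · have he := not_rowEnd_of_lt hθ hθk hii h4 he'
      rw [fillColumn_of_not he, fillColumn_of_not he']
      exact hS.2.2.2.2.1 i i' j hii h1 (hin h2 he) h3 (hin h4 he')
  · rw [ncard_fillColumn_content hS0 (hS.finite_level hθ' m.succ_ne_zero), hS.2.2.2.2.2.1 m]
    unfold removeCol
    split_ifs with hm
    · have := hμ m (by omega)
      omega
    · rfl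
  · exact IsLatticeReading.fillColumn hS0 (fun m => hS.finite_level hθ' m.succ_ne_zero)
      hS.2.2.2.2.2.2

theorem of_fillColumn (hθ : IsPartition θ) (hν : Antitone ν) (hμ : Antitone μ)
    (hgap : μ (k + 1) + ν 0 < μ k) (hS0 : ∀ i < k + 1, S i (θ i - 1) = 0)
    (hT : IsLRFilling θ ν μ (_root_.fillColumn (k + 1) θ S)) :
    IsLRFilling (removeCol (k + 1) θ) ν (removeCol (k + 1) μ) S := by
  have hS : ∀ {i j}, j < removeCol (k + 1) θ i →
      S i j = _root_.fillColumn (k + 1) θ S i j ∧ j < θ i := fun h => by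
    obtain ⟨h1, h2⟩ := lt_removeCol_iff.1 h
    exact ⟨(fillColumn_of_not h2).symm, h1⟩
  have hfin := hT.finite_level_of_fillColumn hθ hS0
  refine ⟨fun i => ?_, fun i j h1 h2 => ?_, fun i j hout => ?_, fun i j j' h1 hjj h3 => ?_,
    fun i i' j hii h1 h2 h3 h4 => ?_, fun m => ?_, ?_⟩
  · unfold removeCol
    split_ifs with hi
    · have := hT.nu_zero_lt_shape hθ hμ (k := k) (by omega) i (by omega)
      have := hν (Nat.zero_le i)
      omega
    · exact hT.1 i
  · rw [(hS h2).1]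
    exact hT.2.1 i j h1 (hS h2).2
  · by_cases he : i < k + 1 ∧ j = θ i - 1
    · rw [he.2]
      exact hS0 i he.1
    · rw [← fillColumn_of_not (S := S) he]
      exact hT.2.2.1 i j fun h => hout ⟨h.1, lt_removeCol_iff.2 ⟨h.2, he⟩⟩
  · rw [(hS (hjj.trans_lt h3)).1, (hS h3).1]
    exact hT.2.2.2.1 i j j' h1 hjj (hS h3).2
  · rw [(hS h2).1, (hS h4).1]
    exact hT.2.2.2.2.1 i i' j hii h1 (hS h2).2 h3 (hS h4).2
  · have h := ncard_fillColumn_content hS0 (hfin m)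
    rw [hT.2.2.2.2.2.1 m] at h
    unfold removeCol
    split_ifs at h ⊢ <;> omega
  · exact hT.isLatticeReading_of_fillColumn hθ hν hμ hgap hS0

end IsLRFilling

theorem lrCoeff_le_lrCoeff_removeCol {k : ℕ} {θ ν μ : ℕ → ℕ} (hθ : IsPartition θ)
    (hθ' : IsPartition (removeCol (k + 1) θ)) (hν : Antitone ν) (hμ : Antitone μ)
    (hgap : μ (k + 1) + ν 0 < μ k) :
    lrCoeff μ ν θ ≤ lrCoeff (removeCol (k + 1) μ) ν (removeCol (k + 1) θ) := by
  have := finite_isLRFilling (ν := ν) (μ := removeCol (k + 1) μ) hθ'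
  have hfill : ∀ T : {T // IsLRFilling θ ν μ T},
      fillColumn (k + 1) θ (eraseColumn (k + 1) θ T.1) = T.1 := fun T =>
    fillColumn_eraseColumn (T.2.apply_rowEnd hθ hν hμ (by omega))
  refine Nat.card_le_card_of_injective (fun T => ⟨eraseColumn (k + 1) θ T.1, ?_⟩)
    fun T T' h => ?_
  · refine IsLRFilling.of_fillColumn hθ hν hμ hgap (fun i hi => ?_) ((hfill T).symm ▸ T.2)
    simp [eraseColumn, hi]
  · rw [Subtype.ext_iff, ← hfill T, ← hfill T']
    exact congrArg (fillColumn (k + 1) θ) (congrArg Subtype.val h)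

theorem lrCoeff_removeCol_le {k : ℕ} {θ ν μ : ℕ → ℕ} (hθ : IsPartition θ)
    (hθ' : IsPartition (removeCol (k + 1) θ)) (hθk : θ (k + 1) < θ k) (hμ : ∀ i ≤ k, 0 < μ i) :
    lrCoeff (removeCol (k + 1) μ) ν (removeCol (k + 1) θ) ≤ lrCoeff μ ν θ := by
  have := finite_isLRFilling (ν := ν) (μ := μ) hθ
  refine Nat.card_le_card_of_injective
    (fun S => ⟨fillColumn (k + 1) θ S.1, S.2.fillColumn hθ.1 hθ' hθk hμ⟩) fun S S' h => ?_
  rw [Subtype.ext_iff, ← eraseColumn_fillColumn S.2.apply_removed,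
    ← eraseColumn_fillColumn S'.2.apply_removed]
  exact congrArg (eraseColumn (k + 1) θ) (congrArg Subtype.val h)

section Star

variable {p k : ℕ} {μ ν : ℕ → ℕ}

theorem lamStar_of_forall_lt {i : ℕ} (h : ∀ j, (ν j : ℤ) - (j + 1) < μ i - (i + 1)) :
    lamStar p μ ν i = μ i - (i + 1) := by
  rw [lamStar, Finset.filter_false_of_mem fun j _ => not_le.2 (h j), Finset.card_empty,
    Nat.cast_zero, add_zero]

theorem natCast_removeCol_of_lt {t i : ℕ} (hi : i < t) (hμ : 0 < μ i) :
    (removeCol t μ i : ℤ) = μ i - 1 := by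
  unfold removeCol
  rw [if_pos hi]
  omega

theorem lamStarN_pos (hsep : ∀ i ≤ k, ∀ j, (ν j : ℤ) - j < μ i - (i + 1)) :
    ∀ i ≤ k, 0 < lamStarN p μ ν i := by
  intro i hi
  have := hsep i hi 0
  rw [lamStarN, lamStar_of_forall_lt fun j => by linarith [hsep i hi j]]
  omega

theorem lamStarN_removeCol (hsep : ∀ i ≤ k, ∀ j, (ν j : ℤ) - j < μ i - (i + 1)) :
    lamStarN p (removeCol (k + 1) μ) ν = removeCol (k + 1) (lamStarN p μ ν) := by
  funext i
  by_cases hi : i < k + 1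
  · have hμi := natCast_removeCol_of_lt (μ := μ) hi (by have := hsep i (by omega) 0; omega)
    rw [show removeCol (k + 1) (lamStarN p μ ν) i = lamStarN p μ ν i - 1 from if_pos hi,
      lamStarN, lamStarN, lamStar_of_forall_lt (μ := μ) fun j => by linarith [hsep i (by omega) j],
      lamStar_of_forall_lt fun j => by rw [hμi]; linarith [hsep i (by omega) j], hμi]
    omega
  · rw [show removeCol (k + 1) (lamStarN p μ ν) i = lamStarN p μ ν i from if_neg hi, lamStarN,
      lamStarN, lamStar, lamStar, show removeCol (k + 1) μ i = μ i from if_neg hi]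

theorem rhoStarN_removeCol (hsep : ∀ i ≤ k, ∀ j, (ν j : ℤ) - j < μ i - (i + 1)) :
    rhoStarN p (removeCol (k + 1) μ) ν = rhoStarN p μ ν := by
  funext j
  have hfilter : (Finset.range p).filter
      (fun i => (ν j : ℤ) - (j + 1) < (removeCol (k + 1) μ i : ℤ) - (i + 1)) =
      (Finset.range p).filter (fun i => (ν j : ℤ) - (j + 1) < (μ i : ℤ) - (i + 1)) := by
    refine Finset.filter_congr fun i _ => ?_
    by_cases hi : i < k + 1
    · have := hsep i (by omega) j
      have := hsep i (by omega) 0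
      rw [natCast_removeCol_of_lt hi (by omega)]
      constructor <;> intro <;> omega
    · rw [show removeCol (k + 1) μ i = μ i from if_neg hi]
  rw [rhoStarN, rhoStarN, rhoStar, rhoStar, hfilter]

end Star

theorem fflp_bounded_height_reduction_general (p : ℕ) (ν : ℕ → ℕ)
    (hν : IsPartitionN p ν)
    (H : ∀ α : ℕ → ℕ, IsPartitionN p α → α 0 ≤ p * (ν 0 + p) →
      ∀ θ : ℕ → ℕ, IsPartition θ →
        lrCoeff α ν θ ≤ lrCoeff (lamStarN p α ν) (rhoStarN p α ν) θ) :
    ∀ μ : ℕ → ℕ, IsPartitionN p μ →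
      ∀ θ : ℕ → ℕ, IsPartition θ →
        lrCoeff μ ν θ ≤ lrCoeff (lamStarN p μ ν) (rhoStarN p μ ν) θ := by
  intro μ hμ
  induction hn : μ 0 using Nat.strong_induction_on generalizing μ with
  | _ n ih =>
  intro θ hθ
  by_cases hsmall : μ 0 ≤ p * (ν 0 + p)
  · exact H μ hμ hsmall θ hθ
  obtain ⟨k, hkp, hgap⟩ := exists_succ_add_lt_of_mul_lt (hμ.2 p le_rfl) (not_le.1 hsmall)
  rcases Nat.eq_zero_or_pos (lrCoeff μ ν θ) with h0 | hpos
  · exact h0 ▸ Nat.zero_le _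
  obtain ⟨⟨T, hT⟩⟩ := (Nat.card_pos_iff.1 hpos).1
  have hθk := hT.shape_succ_lt hθ hν.1 (by omega : μ (k + 1) + ν 0 < μ k)
  have hθ' := hθ.removeCol hθk
  have hsep : ∀ i ≤ k, ∀ j, (ν j : ℤ) - j < μ i - (i + 1) := fun i hi j => by
    have := hν.1 (Nat.zero_le j)
    have := hμ.1 hi
    omega
  calc lrCoeff μ ν θ
      ≤ lrCoeff (removeCol (k + 1) μ) ν (removeCol (k + 1) θ) :=
        lrCoeff_le_lrCoeff_removeCol hθ hθ' hν.1 hμ.1 (by omega)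
    _ ≤ lrCoeff (lamStarN p (removeCol (k + 1) μ) ν) (rhoStarN p (removeCol (k + 1) μ) ν)
          (removeCol (k + 1) θ) :=
        ih _ (by simp only [removeCol, if_pos k.succ_pos]; omega) _ (hμ.removeCol (by omega)) rfl
          _ hθ'
    _ = lrCoeff (removeCol (k + 1) (lamStarN p μ ν)) (rhoStarN p μ ν) (removeCol (k + 1) θ) := by
        rw [lamStarN_removeCol hsep, rhoStarN_removeCol hsep]
    _ ≤ lrCoeff (lamStarN p μ ν) (rhoStarN p μ ν) θ :=
        lrCoeff_removeCol_le hθ hθ' hθk (lamStarN_pos hsep)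

/-- Reduction of the bounded-height case of the Fomin–Fulton–Li–Poon conjecture
to finitely many pairs: if the conjecture holds for all `(α,ν)` with `α` of
height at most `p` and `α_1 ≤ p(ν_1 + p)`, then it holds for all `(μ,ν)` with
`μ` of height at most `p`. -/
theorem fflp_bounded_height_reduction (p : ℕ) (hp : 0 < p) (ν : ℕ → ℕ)
    (hν : IsPartitionN p ν)
    (H : ∀ α : ℕ → ℕ, IsPartitionN p α → α 0 ≤ p * (ν 0 + p) →
      ∀ θ : ℕ → ℕ, IsPartition θ →
        lrCoeff α ν θ ≤ lrCoeff (lamStarN p α ν) (rhoStarN p α ν) θ) :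
    ∀ μ : ℕ → ℕ, IsPartitionN p μ →
      ∀ θ : ℕ → ℕ, IsPartition θ →
        lrCoeff μ ν θ ≤ lrCoeff (lamStarN p μ ν) (rhoStarN p μ ν) θ :=
  fflp_bounded_height_reduction_general p ν hν H
end

section
/- (Conjecture for pairs (0, ν).) Let ν be any partition, and set ν̄ = λ(0,ν) and ν_ = ρ(0,ν), the image of the pair (0, ν) (with 0 the empty partition) under the *-operation. Then there exists at least one LR filling of the skew shape ν/ν_ of type ν̄; equivalently c_{ν̄ ν_}^ν ≥ 1, so that s_{ν̄} s_{ν_} − s_ν is Schur-positive. -/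
def myT (ν : ℕ → ℕ) (i j : ℕ) : ℕ := if ν i - i ≤ j ∧ j < ν i then j + i + 1 - ν i else 0

lemma myT_eq_iff (ν : ℕ → ℕ) (m i j : ℕ) :
    myT ν i j = m + 1 ↔ m < i ∧ i ≤ ν i + m ∧ j = ν i + m - i := by
  unfold myT
  by_cases h : ν i - i ≤ j ∧ j < ν i
  · rw [if_pos h]; omega
  · rw [if_neg h]; omega

lemma rhoStarN_eq (n : ℕ) (ν : ℕ → ℕ) (hν : IsPartitionN n ν) (j : ℕ) :
    rhoStarN n (fun _ => 0) ν j = ν j - j := by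
  unfold rhoStarN rhoStar
  beta_reduce
  simp only [Nat.cast_zero]
  have hcard : ((Finset.range n).filter
      (fun (k : ℕ) => (ν j : ℤ) - ((j : ℤ) + 1) < (0 : ℤ) - ((k : ℤ) + 1))).card
      = min n (j - ν j) := by
    rw [show (Finset.range n).filter
        (fun (k : ℕ) => (ν j : ℤ) - ((j : ℤ) + 1) < (0 : ℤ) - ((k : ℤ) + 1))
        = Finset.range (min n (j - ν j)) from by
      ext k
      simp only [Finset.mem_filter, Finset.mem_range]
      omega]
    exact Finset.card_range _
  rw [hcard]
  rcases le_or_gt n j with hj | hj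
  · have h0 := hν.2 j hj
    omega
  · omega

lemma lamStarN_eq (n : ℕ) (ν : ℕ → ℕ) (m : ℕ) :
    lamStarN n (fun _ => 0) ν m
      = ((Finset.range n).filter (fun j => m < j ∧ j ≤ ν j + m)).card := by
  unfold lamStarN lamStar
  beta_reduce
  simp only [Nat.cast_zero]
  have hcard : ((Finset.range n).filter
      (fun (j : ℕ) => (0 : ℤ) - ((m : ℤ) + 1) ≤ (ν j : ℤ) - ((j : ℤ) + 1))).card
      = min n (m + 1) + ((Finset.range n).filter (fun j => m < j ∧ j ≤ ν j + m)).card := by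
    rw [show (Finset.range n).filter
        (fun (j : ℕ) => (0 : ℤ) - ((m : ℤ) + 1) ≤ (ν j : ℤ) - ((j : ℤ) + 1))
        = Finset.range (min n (m + 1)) ∪
          (Finset.range n).filter (fun j => m < j ∧ j ≤ ν j + m) from by
      ext j
      simp only [Finset.mem_union, Finset.mem_filter, Finset.mem_range]
      omega]
    rw [Finset.card_union_of_disjoint, Finset.card_range]
    rw [Finset.disjoint_left]
    intro a ha hb
    simp only [Finset.mem_range, Finset.mem_filter] at ha hb
    omega
  rw [hcard]
  rcases le_or_gt n (m + 1) with h | h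
  · have h0 : ((Finset.range n).filter (fun j => m < j ∧ j ≤ ν j + m)).card = 0 := by
      rw [Finset.card_eq_zero, Finset.filter_eq_empty_iff]
      intro j hj
      simp only [Finset.mem_range] at hj
      omega
    omega
  · omega

lemma myT_setOf_eq (n : ℕ) (ν : ℕ → ℕ) (hν : IsPartitionN n ν) (m : ℕ) :
    {p : ℕ × ℕ | myT ν p.1 p.2 = m + 1}
      = (fun i => (i, ν i + m - i)) ''
        ↑((Finset.range n).filter (fun j => m < j ∧ j ≤ ν j + m)) := by
  ext p
  simp only [Set.mem_setOf_eq, Set.mem_image, Finset.coe_filter, Finset.mem_range,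
    Set.mem_setOf_eq, myT_eq_iff]
  constructor
  · rintro ⟨h1, h2, h3⟩
    have hin : p.1 < n := by
      by_contra hn
      have := hν.2 p.1 (le_of_not_gt hn)
      omega
    refine ⟨p.1, ⟨hin, h1, h2⟩, ?_⟩
    rw [← h3]
  · rintro ⟨a, ⟨han, h1, h2⟩, heq⟩
    subst heq
    exact ⟨h1, h2, rfl⟩

lemma content (n : ℕ) (ν : ℕ → ℕ) (hν : IsPartitionN n ν) (m : ℕ) :
    {p : ℕ × ℕ | myT ν p.1 p.2 = m + 1}.ncard = lamStarN n (fun _ => 0) ν m := by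
  rw [lamStarN_eq, myT_setOf_eq n ν hν m,
    Set.ncard_image_of_injective _ (fun a b h => congrArg Prod.fst h),
    Set.ncard_coe_finset]

lemma lattice (n : ℕ) (ν : ℕ → ℕ) (hν : IsPartitionN n ν) (m i j : ℕ) :
    {p : ℕ × ℕ | myT ν p.1 p.2 = m + 2 ∧ (p.1 < i ∨ (p.1 = i ∧ j ≤ p.2))}.ncard ≤
    {p : ℕ × ℕ | myT ν p.1 p.2 = m + 1 ∧ (p.1 < i ∨ (p.1 = i ∧ j ≤ p.2))}.ncard := by
  have hfin : {p : ℕ × ℕ | myT ν p.1 p.2 = m + 1 ∧ (p.1 < i ∨ (p.1 = i ∧ j ≤ p.2))}.Finite := by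
    apply Set.Finite.subset
      (Set.Finite.image (fun i => (i, ν i + m - i))
        (Finset.finite_toSet ((Finset.range n).filter (fun j => m < j ∧ j ≤ ν j + m))))
    intro p hp
    have : p ∈ {p : ℕ × ℕ | myT ν p.1 p.2 = m + 1} := hp.1
    rwa [myT_setOf_eq n ν hν m] at this
  apply Set.ncard_le_ncard_of_injOn
    (fun p => (p.1 - 1, ν (p.1 - 1) + m - (p.1 - 1))) _ _ hfin
  · rintro ⟨a1, a2⟩ ⟨ha, hpref⟩
    simp only [Set.mem_setOf_eq] at ha hpref ⊢
    have h := (myT_eq_iff ν (m + 1) a1 a2).mp ha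
    have hmono : ν a1 ≤ ν (a1 - 1) := hν.1 (Nat.sub_le _ _)
    constructor
    · rw [myT_eq_iff]
      exact ⟨by omega, by omega, rfl⟩
    · left; omega
  · rintro ⟨a1, a2⟩ ha ⟨b1, b2⟩ hb heq
    simp only [Set.mem_setOf_eq] at ha hb
    have h1 := (myT_eq_iff ν (m + 1) a1 a2).mp ha.1
    have h2 := (myT_eq_iff ν (m + 1) b1 b2).mp hb.1
    simp only [Prod.mk.injEq] at heq ⊢
    have : a1 = b1 := by omega
    subst this
    omega

lemma main_filling (n : ℕ) (ν : ℕ → ℕ) (hν : IsPartitionN n ν) :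
    IsLRFilling ν (rhoStarN n (fun _ => 0) ν) (lamStarN n (fun _ => 0) ν) (myT ν) := by
  have hρ : ∀ i, rhoStarN n (fun _ => 0) ν i = ν i - i := rhoStarN_eq n ν hν
  refine ⟨?_, ?_, ?_, ?_, ?_, ?_, ?_⟩
  · intro i; rw [hρ]; omega
  · intro i j h1 h2; rw [hρ] at h1
    unfold myT; rw [if_pos ⟨h1, h2⟩]; omega
  · intro i j h; rw [hρ] at h
    unfold myT; rw [if_neg h]
  · intro i j j' h1 h2 h3; rw [hρ] at h1
    unfold myT
    rw [if_pos ⟨h1, by omega⟩, if_pos ⟨by omega, h3⟩]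
    omega
  · intro i i' j hii h1 h2 h3 h4; rw [hρ] at h1 h3
    have hm : ν i' ≤ ν i := hν.1 (le_of_lt hii)
    unfold myT
    rw [if_pos ⟨h1, h2⟩, if_pos ⟨h3, h4⟩]
    omega
  · exact content n ν hν
  · exact lattice n ν hν

lemma key_bounds (n : ℕ) (ν : ℕ → ℕ) (hν : IsPartitionN n ν) (T : ℕ → ℕ → ℕ)
    (hT : IsLRFilling ν (rhoStarN n (fun _ => 0) ν) (lamStarN n (fun _ => 0) ν) T)
    (i j : ℕ) : T i j ≤ n ∧ (n ≤ i ∨ ν 0 ≤ j → T i j = 0) := by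
  obtain ⟨hsub, hpos, hzero, hrow, hcol, hcontent, hlat⟩ := hT
  constructor
  · by_cases h0 : T i j = 0
    · omega
    · set v := T i j with hv
      have hv1 : 1 ≤ v := by omega
      have hshape : ∀ a b : ℕ, T a b ≠ 0 → b < ν a := by
        intro a b hab
        by_contra hc
        exact hab (hzero a b (by omega))
      have hfin : {p : ℕ × ℕ | T p.1 p.2 = v - 1 + 1}.Finite := by
        apply Set.Finite.subset (Set.finite_Icc ((0 : ℕ), (0 : ℕ)) (n, ν 0))
        intro p hp
        simp only [Set.mem_setOf_eq] at hp
        have hb := hshape p.1 p.2 (by omega)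
        have hp1 : p.1 < n := by
          by_contra hn
          have := hν.2 p.1 (le_of_not_gt hn)
          omega
        have hp2 : p.2 < ν 0 := lt_of_lt_of_le hb (hν.1 (Nat.zero_le _))
        simp only [Set.mem_Icc, Prod.le_def]
        omega
      have hne : {p : ℕ × ℕ | T p.1 p.2 = v - 1 + 1}.Nonempty :=
        ⟨(i, j), by simp only [Set.mem_setOf_eq]; omega⟩
      have hpos' : 0 < lamStarN n (fun _ => 0) ν (v - 1) := by
        rw [← hcontent (v - 1)]
        exact (Set.ncard_pos hfin).mpr hne
      rw [lamStarN_eq] at hpos'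
      obtain ⟨a, ha⟩ := Finset.card_pos.mp hpos'
      simp only [Finset.mem_filter, Finset.mem_range] at ha
      omega
  · intro h
    apply hzero
    rintro ⟨h1, h2⟩
    rcases h with h | h
    · have := hν.2 i h; omega
    · have := hν.1 (Nat.zero_le i); omega

lemma fillings_finite (n : ℕ) (ν : ℕ → ℕ) (hν : IsPartitionN n ν) :
    Finite {T : ℕ → ℕ → ℕ //
      IsLRFilling ν (rhoStarN n (fun _ => 0) ν) (lamStarN n (fun _ => 0) ν) T} := by
  let F : {T : ℕ → ℕ → ℕ //
      IsLRFilling ν (rhoStarN n (fun _ => 0) ν) (lamStarN n (fun _ => 0) ν) T}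
      → (Fin n × Fin (ν 0) → Fin (n + 1)) :=
    fun Th p => ⟨Th.1 p.1 p.2, by
      have := (key_bounds n ν hν Th.1 Th.2 p.1 p.2).1; omega⟩
  have hF : Function.Injective F := by
    rintro ⟨T1, h1⟩ ⟨T2, h2⟩ heq
    apply Subtype.ext
    funext i j
    by_cases hij : i < n ∧ j < ν 0
    · have := congrFun heq (⟨i, hij.1⟩, ⟨j, hij.2⟩)
      simpa [F, Fin.ext_iff] using this
    · have e1 := (key_bounds n ν hν T1 h1 i j).2 (by omega)
      have e2 := (key_bounds n ν hν T2 h2 i j).2 (by omega)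
      show T1 i j = T2 i j
      rw [e1, e2]
  exact Finite.of_injective F hF

/-- The conjecture for pairs `(0,ν)`: with `ν̄ = λ(0,ν)` and `ν_ = ρ(0,ν)`,
there is an LR filling of `ν/ν_` of type `ν̄`; equivalently `c_{ν̄ ν_}^ν ≥ 1`. -/
theorem fflp_empty_left (n : ℕ) (ν : ℕ → ℕ) (hν : IsPartitionN n ν) :
    (∃ T : ℕ → ℕ → ℕ,
      IsLRFilling ν (rhoStarN n (fun _ => 0) ν) (lamStarN n (fun _ => 0) ν) T) ∧
    1 ≤ lrCoeff (lamStarN n (fun _ => 0) ν) (rhoStarN n (fun _ => 0) ν) ν := by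
  have hmain := main_filling n ν hν
  refine ⟨⟨myT ν, hmain⟩, ?_⟩
  haveI h1 := fillings_finite n ν hν
  haveI : Nonempty {T : ℕ → ℕ → ℕ //
      IsLRFilling ν (rhoStarN n (fun _ => 0) ν) (lamStarN n (fun _ => 0) ν) T} :=
    ⟨⟨myT ν, hmain⟩⟩
  unfold lrCoeff
  exact Nat.card_pos
end

section
/- (Recursive formula, left entry.) Let α and ν be partitions with n parts, let (λ, ρ) = (λ(α,ν), ρ(α,ν)), and let μ be the partition obtained from α by adding one cell in row i (i.e., μ_i = α_i + 1 and μ_k = α_k for k ≠ i, with μ still a partition). If there exists j with 1 ≤ j ≤ n and ν_j − j = α_i − i, then λ(μ,ν) = λ and ρ(μ,ν) is obtained from ρ by adding one cell in row j; moreover in this case ρ(μ,ν)_j = μ_i (the new cell of ρ lies in column μ_i). Otherwise, λ(μ,ν) is obtained from λ by adding one cell in row i, and ρ(μ,ν) = ρ. -/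
open Finset

section Counting

variable {ι : Type*} [DecidableEq ι] (s : Finset ι)

lemma card_filter_le_eq_card_filter_lt_add (b : ι → ℤ) (c : ℤ) :
    #{j ∈ s | c ≤ b j} = #{j ∈ s | c < b j} + #{j ∈ s | b j = c} := by
  rw [← card_union_of_disjoint (disjoint_filter.2 fun _ _ hlt heq => hlt.ne' heq)]
  congr 1
  ext j
  simp only [mem_filter, mem_union, ← and_or_left, le_iff_lt_or_eq, eq_comm]

lemma card_filter_eq_apply_of_injective {b : ι → ℤ} (hb : Function.Injective b) {j : ι}
    (hj : j ∈ s) : #{k ∈ s | b k = b j} = 1 := by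
  simp [hb.eq_iff, filter_eq', hj]

variable {s}

lemma card_filter_lt_of_add_one_at {a m : ι → ℤ} {i : ι} (hi : i ∈ s) (hmi : m i = a i + 1)
    (hm : ∀ k, k ≠ i → m k = a k) (c : ℤ) :
    #{k ∈ s | c < m k} = #{k ∈ s | c < a k} + if a i = c then 1 else 0 := by
  split_ifs with hc
  · have : {k ∈ s | c < m k} = insert i {k ∈ s | c < a k} := by
      ext k
      rcases eq_or_ne k i with rfl | hk
      · simp [hi, hmi, hc]
      · simp [hk, hm k hk]
    rw [this, card_insert_of_notMem (by simp [hc])]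
  · congr 1
    refine filter_congr fun k _ => ?_
    rcases eq_or_ne k i with rfl | hk
    · omega
    · rw [hm k hk]

end Counting

lemma StrictAnti.card_filter_lt_apply {f : ℕ → ℤ} (hf : StrictAnti f) {n i : ℕ} (hi : i ≤ n) :
    #{k ∈ range n | f i < f k} = i := by
  convert card_range i using 2
  ext k
  simp only [mem_filter, mem_range, hf.lt_iff_gt]
  omega

lemma Antitone.strictAnti_sub_succ {α : ℕ → ℕ} (h : Antitone α) :
    StrictAnti fun k => (α k : ℤ) - (k + 1) := by
  intro a b hab
  have := h hab.le
  simp only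
  omega

section Star

variable (n : ℕ) {α μ : ℕ → ℕ} (ν : ℕ → ℕ)

lemma lamStar_congr_left {k : ℕ} (h : μ k = α k) : lamStar n μ ν k = lamStar n α ν k := by
  simp only [lamStar, h]

lemma lamStar_add_cell {i : ℕ} (h : μ i = α i + 1) :
    lamStar n μ ν i + #{j ∈ range n | (ν j : ℤ) - (j + 1) = (α i : ℤ) - (i + 1)} =
      lamStar n α ν i + 1 := by
  have hshift : {j ∈ range n | (μ i : ℤ) - (i + 1) ≤ (ν j : ℤ) - (j + 1)} =
      {j ∈ range n | (α i : ℤ) - (i + 1) < (ν j : ℤ) - (j + 1)} :=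
    filter_congr fun j _ => by omega
  unfold lamStar
  rw [hshift, card_filter_le_eq_card_filter_lt_add, h]
  push_cast
  ring

lemma rhoStar_add_cell {i : ℕ} (hi : i < n) (hμi : μ i = α i + 1)
    (hμ : ∀ k, k ≠ i → μ k = α k) (j : ℕ) :
    rhoStar n μ ν j = rhoStar n α ν j +
      if (α i : ℤ) - (i + 1) = (ν j : ℤ) - (j + 1) then 1 else 0 := by
  unfold rhoStar
  rw [card_filter_lt_of_add_one_at (a := fun k => (α k : ℤ) - (k + 1)) (mem_range.2 hi)
    (by simp only [hμi]; push_cast; ring) (fun k hk => by simp only [hμ k hk])]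
  split_ifs <;> push_cast <;> ring

lemma rhoStar_eq_of_sub_eq (hα : Antitone α) {i j : ℕ} (hi : i < n)
    (hij : (ν j : ℤ) - (j + 1) = (α i : ℤ) - (i + 1)) : rhoStar n α ν j = α i := by
  unfold rhoStar
  rw [hij, hα.strictAnti_sub_succ.card_filter_lt_apply hi.le]
  ring

end Star

theorem star_recursive_left_general (n : ℕ) (α ν μ : ℕ → ℕ)
    (hα : IsPartitionN n α) (hν : IsPartitionN n ν)
    (i : ℕ) (hi : i < n)
    (hgrow : μ i = α i + 1 ∧ ∀ k, k ≠ i → μ k = α k) :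
    (∀ j, j < n → (ν j : ℤ) - (j + 1) = (α i : ℤ) - (i + 1) →
      (∀ k, k < n → lamStar n μ ν k = lamStar n α ν k) ∧
      rhoStar n μ ν j = rhoStar n α ν j + 1 ∧
      rhoStar n μ ν j = (μ i : ℤ) ∧
      (∀ k, k < n → k ≠ j → rhoStar n μ ν k = rhoStar n α ν k)) ∧
    ((∀ j, j < n → (ν j : ℤ) - (j + 1) ≠ (α i : ℤ) - (i + 1)) →
      lamStar n μ ν i = lamStar n α ν i + 1 ∧
      (∀ k, k < n → k ≠ i → lamStar n μ ν k = lamStar n α ν k) ∧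
      (∀ k, k < n → rhoStar n μ ν k = rhoStar n α ν k)) := by
  obtain ⟨hμi, hμ⟩ := hgrow
  have hνinj := hν.1.strictAnti_sub_succ.injective
  have hlam := lamStar_add_cell n ν hμi
  have hrho := rhoStar_add_cell n ν hi hμi hμ
  refine ⟨fun j hj hij => ?_, fun hnone => ?_⟩
  · have hcount : #{k ∈ range n | (ν k : ℤ) - (k + 1) = (α i : ℤ) - (i + 1)} = 1 := by
      simpa only [hij] using card_filter_eq_apply_of_injective _ hνinj (mem_range.2 hj)
    refine ⟨fun k _ => ?_, by simp [hrho, hij], ?_, fun k _ hkj => ?_⟩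
    · rcases eq_or_ne k i with rfl | hki
      · push_cast [hcount] at hlam
        omega
      · exact lamStar_congr_left n ν (hμ k hki)
    · rw [hrho, if_pos hij.symm, rhoStar_eq_of_sub_eq n ν hα.1 hi hij, hμi]
      push_cast
      ring
    · rw [hrho, if_neg fun h => hkj (hνinj (h.symm.trans hij.symm)), add_zero]
  · have hcount : #{k ∈ range n | (ν k : ℤ) - (k + 1) = (α i : ℤ) - (i + 1)} = 0 :=
      card_eq_zero.2 (filter_eq_empty_iff.2 fun k hk => hnone k (mem_range.1 hk))
    refine ⟨by simpa [hcount] using hlam, fun k _ hki => lamStar_congr_left n ν (hμ k hki),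
      fun k hk => ?_⟩
    rw [hrho, if_neg fun h => hnone k hk h.symm, add_zero]

/-- Recursive formula for the `*`-operation, left entry: if `μ` is obtained
from `α` by adding one cell in row `i` (0-indexed), then either some row `j`
of `ν` satisfies `ν_j − j = α_i − i`, in which case `λ` is unchanged and `ρ`
grows by one cell in row `j`, landing in column `μ_i`; or otherwise `λ` grows
by one cell in row `i` and `ρ` is unchanged. -/
theorem star_recursive_left (n : ℕ) (α ν μ : ℕ → ℕ)
    (hα : IsPartitionN n α) (hν : IsPartitionN n ν) (hμ : IsPartitionN n μ)
    (i : ℕ) (hi : i < n)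
    (hgrow : μ i = α i + 1 ∧ ∀ k, k ≠ i → μ k = α k) :
    (∀ j, j < n → (ν j : ℤ) - (j + 1) = (α i : ℤ) - (i + 1) →
      (∀ k, k < n → lamStar n μ ν k = lamStar n α ν k) ∧
      rhoStar n μ ν j = rhoStar n α ν j + 1 ∧
      rhoStar n μ ν j = (μ i : ℤ) ∧
      (∀ k, k < n → k ≠ j → rhoStar n μ ν k = rhoStar n α ν k)) ∧
    ((∀ j, j < n → (ν j : ℤ) - (j + 1) ≠ (α i : ℤ) - (i + 1)) →
      lamStar n μ ν i = lamStar n α ν i + 1 ∧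
      (∀ k, k < n → k ≠ i → lamStar n μ ν k = lamStar n α ν k) ∧
      (∀ k, k < n → rhoStar n μ ν k = rhoStar n α ν k)) :=
  star_recursive_left_general n α ν μ hα hν i hi hgrow
end

section
/- (Recursive formula, right entry.) Let μ and β be partitions with n parts, let (λ, ρ) = (λ(μ,β), ρ(μ,β)), and let ν be the partition obtained from β by adding one cell in row i (i.e., ν_i = β_i + 1 and ν_k = β_k for k ≠ i, with ν still a partition). If there exists j with 1 ≤ j ≤ n and μ_j − j = ν_i − i, then ρ(μ,ν) = ρ and λ(μ,ν) is obtained from λ by adding one cell in row j; moreover in this case λ(μ,ν)_j = ν_i (the new cell of λ lies in column ν_i). Otherwise, ρ(μ,ν) is obtained from ρ by adding one cell in row i, and λ(μ,ν) = λ. -/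
private lemma strictAnti_diff {σ : ℕ → ℕ} (h : Antitone σ) :
    StrictAnti (fun k : ℕ => (σ k : ℤ) - (k + 1)) := by
  intro a b hab
  have h1 : σ b ≤ σ a := h hab.le
  have h2 : (σ b : ℤ) ≤ (σ a : ℤ) := by exact_mod_cast h1
  have h3 : (a : ℤ) < (b : ℤ) := by exact_mod_cast hab
  simp only
  omega

/-- Recursive formula for the `*`-operation, right entry: if `ν` is obtained
from `β` by adding one cell in row `i` (0-indexed), then either some row `j`
of `μ` satisfies `μ_j − j = ν_i − i`, in which case `ρ` is unchanged and `λ`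
grows by one cell in row `j`, landing in column `ν_i`; or otherwise `ρ` grows
by one cell in row `i` and `λ` is unchanged. -/
theorem star_recursive_right (n : ℕ) (μ β ν : ℕ → ℕ)
    (hμ : IsPartitionN n μ) (hβ : IsPartitionN n β) (hν : IsPartitionN n ν)
    (i : ℕ) (hi : i < n)
    (hgrow : ν i = β i + 1 ∧ ∀ k, k ≠ i → ν k = β k) :
    (∀ j, j < n → (μ j : ℤ) - (j + 1) = (ν i : ℤ) - (i + 1) →
      (∀ k, k < n → rhoStar n μ ν k = rhoStar n μ β k) ∧
      lamStar n μ ν j = lamStar n μ β j + 1 ∧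
      lamStar n μ ν j = (ν i : ℤ) ∧
      (∀ k, k < n → k ≠ j → lamStar n μ ν k = lamStar n μ β k)) ∧
    ((∀ j, j < n → (μ j : ℤ) - (j + 1) ≠ (ν i : ℤ) - (i + 1)) →
      rhoStar n μ ν i = rhoStar n μ β i + 1 ∧
      (∀ k, k < n → k ≠ i → rhoStar n μ ν k = rhoStar n μ β k) ∧
      (∀ k, k < n → lamStar n μ ν k = lamStar n μ β k)) := by

  obtain ⟨hg1, hg2⟩ := hgrow
  have hdν : ∀ k, k ≠ i → (ν k : ℤ) = (β k : ℤ) := fun k hk => by exact_mod_cast hg2 k hk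
  have hdi : (ν i : ℤ) = (β i : ℤ) + 1 := by exact_mod_cast hg1
  have hμanti := strictAnti_diff hμ.1
  have hνanti := strictAnti_diff hν.1
  -- lamStar unchanged at k when μ_k - k ≠ ν_i - i
  have lam_eq : ∀ k, (μ k : ℤ) - (k + 1) ≠ (ν i : ℤ) - (i + 1) →
      lamStar n μ ν k = lamStar n μ β k := by
    intro k hk
    unfold lamStar
    have hf : ((Finset.range n).filter (fun j => (μ k : ℤ) - (k + 1) ≤ (ν j : ℤ) - (j + 1)))
        = ((Finset.range n).filter (fun j => (μ k : ℤ) - (k + 1) ≤ (β j : ℤ) - (j + 1))) := by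
      apply Finset.filter_congr
      intro m _
      by_cases hmi : m = i
      · subst hmi
        constructor <;> intro h <;> omega
      · rw [hdν m hmi]
    rw [hf]
  -- rhoStar unchanged at k ≠ i
  have rho_eq : ∀ k, k ≠ i → rhoStar n μ ν k = rhoStar n μ β k := by
    intro k hk
    unfold rhoStar
    rw [hdν k hk]
  constructor
  · intro j hj hdj
    have hμj : ∀ m, m ≠ j → (μ m : ℤ) - (m + 1) ≠ (ν i : ℤ) - (i + 1) := by
      intro m hm heq
      exact hm (hμanti.injective (show (μ m : ℤ) - (m + 1) = (μ j : ℤ) - (j + 1) by rw [heq, hdj]))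
    refine ⟨?_, ?_, ?_, fun k _ hk => lam_eq k (hμj k hk)⟩
    · -- rhoStar unchanged everywhere
      intro k _
      by_cases hk : k = i
      · subst hk
        unfold rhoStar
        have hf : ((Finset.range n).filter (fun m => (β k : ℤ) - (k + 1) < (μ m : ℤ) - (m + 1)))
            = insert j ((Finset.range n).filter
                (fun m => (ν k : ℤ) - (k + 1) < (μ m : ℤ) - (m + 1))) := by
          ext m
          simp only [Finset.mem_filter, Finset.mem_insert, Finset.mem_range]
          by_cases hm : m = j
          · subst hm
            constructor
            · intro _; exact Or.inl rfl
            · intro _; exact ⟨hj, by omega⟩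
          · have := hμj m hm
            constructor
            · intro ⟨h1, h2⟩; exact Or.inr ⟨h1, by omega⟩
            · rintro (h | ⟨h1, h2⟩)
              · exact absurd h hm
              · exact ⟨h1, by omega⟩
        have hnm : j ∉ ((Finset.range n).filter
            (fun m => (ν k : ℤ) - (k + 1) < (μ m : ℤ) - (m + 1))) := by
          simp only [Finset.mem_filter, Finset.mem_range, not_and]
          intro _; omega
        rw [hf, Finset.card_insert_of_notMem hnm]
        push_cast
        omega
      · exact rho_eq k hk
    · -- lamStar grows at j
      unfold lamStar
      have hf : ((Finset.range n).filter (fun m => (μ j : ℤ) - (j + 1) ≤ (ν m : ℤ) - (m + 1)))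
          = insert i ((Finset.range n).filter
              (fun m => (μ j : ℤ) - (j + 1) ≤ (β m : ℤ) - (m + 1))) := by
        ext m
        simp only [Finset.mem_filter, Finset.mem_insert, Finset.mem_range]
        by_cases hm : m = i
        · subst hm
          constructor
          · intro _; exact Or.inl rfl
          · intro _; exact ⟨hi, by omega⟩
        · rw [hdν m hm]
          constructor
          · intro ⟨h1, h2⟩; exact Or.inr ⟨h1, h2⟩
          · rintro (h | h)
            · exact absurd h hm
            · exact h
      have hnm : i ∉ ((Finset.range n).filter
          (fun m => (μ j : ℤ) - (j + 1) ≤ (β m : ℤ) - (m + 1))) := by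
        simp only [Finset.mem_filter, Finset.mem_range, not_and]
        intro _; omega
      rw [hf, Finset.card_insert_of_notMem hnm]
      push_cast
      omega
    · -- the new cell lands in column ν_i
      unfold lamStar
      have hf : ((Finset.range n).filter (fun m => (μ j : ℤ) - (j + 1) ≤ (ν m : ℤ) - (m + 1)))
          = Finset.range (i + 1) := by
        ext m
        simp only [Finset.mem_filter, Finset.mem_range]
        constructor
        · intro ⟨_, h2⟩
          by_contra h
          push_neg at h
          have := hνanti (by omega : i < m)
          simp only at this
          omega
        · intro hm
          have h1 : m ≤ i := by omega
          have := hνanti.antitone h1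
          exact ⟨by omega, by omega⟩
      rw [hf, hdj]
      simp only [Finset.card_range]
      push_cast
      omega
  · intro hno
    refine ⟨?_, fun k _ hk => rho_eq k hk, fun k hk => lam_eq k (hno k hk)⟩
    unfold rhoStar
    have hf : ((Finset.range n).filter (fun m => (ν i : ℤ) - (i + 1) < (μ m : ℤ) - (m + 1)))
        = ((Finset.range n).filter (fun m => (β i : ℤ) - (i + 1) < (μ m : ℤ) - (m + 1))) := by
      apply Finset.filter_congr
      intro m hm
      simp only [Finset.mem_range] at hm
      have := hno m hm
      constructor <;> intro h <;> omega
    rw [hf]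
    push_cast
    omega
end

section
/- (Compatibility with conjugation.) Let μ and ν be partitions, all partitions being padded with zero parts to a common number of parts N with N ≥ μ_1 and N ≥ ν_1 (the *-operation is unchanged by appending zero parts). Then (μ,ν)* = (λ,ρ) if and only if (ν′,μ′)* = (λ′,ρ′), i.e., λ(ν′,μ′) = λ(μ,ν)′ and ρ(ν′,μ′) = ρ(μ,ν)′, where σ′ denotes the conjugate partition of σ. -/
/-! Write `c_σ(x) = #{k ≤ N : σ_k - k ≥ x}` (`countShiftedGe`, 0-indexed). The Galois connection
`j ≤ σ_i ↔ i ≤ σ'_j` between a partition in the `N × N` box and its conjugate gives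
`c_{σ'}(x) + x = c_σ(-x)` for `|x| ≤ N`. Both `λ` and `ρ` have the form `m ↦ d_m + c_β(d_m)` with
`d_m = α_m - m + s` (`s = 0` for `λ`, `s = 1` for `ρ`), so by the identity their parts are
`c_{β'}(-d_m)`. Since `c_{β'}(y) ≥ k ↔ y ≤ β'_k - k`, the conjugate of this sequence has `k`-th part
`c_α(-(β'_k - k + s))`, which is the identity again, read for `(β', α')`. -/

open Finset

lemma lt_card_iff_mem_of_isLowerSet {s : Finset ℕ} (hs : IsLowerSet (s : Set ℕ)) (i : ℕ) :
    i < #s ↔ i ∈ s := by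
  constructor
  · intro hi
    by_contra hmem
    have hsub : s ⊆ range i := fun b hb =>
      mem_range.2 (lt_of_not_ge fun hib => hmem (hs hib hb))
    have := card_le_card hsub
    rw [card_range] at this
    omega
  · intro hmem
    have hsub : range (i + 1) ⊆ s := fun a ha => hs (Nat.lt_succ_iff.1 (mem_range.1 ha)) hmem
    simpa using card_le_card hsub

section Conjugate

variable {N : ℕ} {σ : ℕ → ℕ}

lemma conjP_eq_card_filter_range (hσ : ∀ i, N ≤ i → σ i = 0) (j : ℕ) :
    conjP σ j = #{k ∈ range N | j + 1 ≤ σ k} := by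
  rw [conjP, ← Set.ncard_coe_finset]
  congr 1
  ext k
  simp only [Set.mem_ofPred_eq, coe_filter, mem_range, iff_and_self]
  intro hk
  by_contra hkN
  rw [hσ k (not_lt.1 hkN)] at hk
  omega

lemma conjP_le (hσ : ∀ i, N ≤ i → σ i = 0) (j : ℕ) : conjP σ j ≤ N := by
  rw [conjP_eq_card_filter_range hσ]
  exact (card_filter_le _ _).trans_eq (card_range N)

lemma succ_le_conjP_iff (hanti : Antitone σ) (hσ : ∀ i, N ≤ i → σ i = 0) (i j : ℕ) :
    i + 1 ≤ conjP σ j ↔ j + 1 ≤ σ i := by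
  have hlower : IsLowerSet (({k ∈ range N | j + 1 ≤ σ k} : Finset ℕ) : Set ℕ) := by
    intro a b hba ha
    simp only [coe_filter, mem_range, Set.mem_ofPred_eq] at ha ⊢
    exact ⟨by omega, ha.2.trans (hanti hba)⟩
  rw [conjP_eq_card_filter_range hσ, Nat.add_one_le_iff, lt_card_iff_mem_of_isLowerSet hlower,
    mem_filter, mem_range, and_iff_right_iff_imp]
  intro hi
  by_contra hiN
  rw [hσ i (not_lt.1 hiN)] at hi
  omega

lemma antitone_conjP (hσ : ∀ i, N ≤ i → σ i = 0) : Antitone (conjP σ) := by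
  intro a b hab
  rw [conjP_eq_card_filter_range hσ, conjP_eq_card_filter_range hσ]
  exact card_le_card (monotone_filter_right _ fun k _ hk => by omega)

lemma conjP_eq_zero (hanti : Antitone σ) (hσ : ∀ i, N ≤ i → σ i = 0) (h0 : σ 0 ≤ N) {j : ℕ}
    (hj : N ≤ j) : conjP σ j = 0 := by
  by_contra hne
  have := (succ_le_conjP_iff hanti hσ 0 j).1 (by omega)
  omega

end Conjugate

def countShiftedGe (N : ℕ) (σ : ℕ → ℕ) (x : ℤ) : ℕ :=
  #{k ∈ range N | x ≤ (σ k : ℤ) - (k + 1)}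

section CountShiftedGe

variable {N : ℕ} {σ : ℕ → ℕ}

lemma countShiftedGe_le (x : ℤ) : countShiftedGe N σ x ≤ N :=
  (card_filter_le _ _).trans_eq (card_range N)

lemma succ_le_countShiftedGe_iff (hanti : Antitone σ) {k : ℕ} (hk : k < N) (x : ℤ) :
    k + 1 ≤ countShiftedGe N σ x ↔ x ≤ (σ k : ℤ) - (k + 1) := by
  have hlower : IsLowerSet (({k ∈ range N | x ≤ (σ k : ℤ) - (k + 1)} : Finset ℕ) : Set ℕ) := by
    intro a b hba ha
    simp only [coe_filter, mem_range, Set.mem_ofPred_eq] at ha ⊢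
    have : (σ a : ℤ) ≤ σ b := by exact_mod_cast hanti hba
    exact ⟨by omega, by omega⟩
  rw [countShiftedGe, Nat.add_one_le_iff, lt_card_iff_mem_of_isLowerSet hlower, mem_filter,
    mem_range, and_iff_right hk]

lemma countShiftedGe_add_eq_of_galois {τ : ℕ → ℕ} (hστ : ∀ i j, j + 1 ≤ σ i ↔ i + 1 ≤ τ j)
    (hσ : ∀ i, N ≤ i → σ i = 0) {n : ℕ} (hn : n ≤ N) :
    (countShiftedGe N τ n : ℤ) + n = countShiftedGe N σ (-n) := by
  -- Both sides reduce to `#{j < N - n | j + 1 ≤ σ (n + j)}`: the last `n` indices never count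
  -- for `τ`, and the first `n` always count for `σ`.
  obtain ⟨m, rfl⟩ : ∃ m, N = m + n := ⟨N - n, by omega⟩
  have hτ : countShiftedGe (m + n) τ n = #{j ∈ range m | j + 1 ≤ σ (n + j)} := by
    rw [countShiftedGe, card_filter, sum_range_add, card_filter, sum_eq_zero (s := range n),
      add_zero]
    · refine sum_congr rfl fun j _ => if_congr ?_ rfl rfl
      rw [hστ (n + j) j]
      omega
    · refine fun j _ => if_neg ?_
      have := (hστ (n + (m + j)) (m + j)).not.1 (by rw [hσ _ (by omega)]; omega)
      omega
  have hσ' : countShiftedGe (m + n) σ (-n) = n + #{j ∈ range m | j + 1 ≤ σ (n + j)} := by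
    rw [countShiftedGe, add_comm m n, card_filter, sum_range_add, card_filter]
    congr 1
    · refine (sum_congr rfl fun i hi => if_pos ?_).trans (by simp)
      rw [mem_range] at hi
      omega
    · refine sum_congr rfl fun j _ => if_congr ?_ rfl rfl
      push_cast
      omega
  rw [hτ, hσ']
  push_cast
  ring

lemma countShiftedGe_conjP_add (hσ : IsPartitionN N σ) (h0 : σ 0 ≤ N) {x : ℤ} (hx₁ : -N ≤ x)
    (hx₂ : x ≤ N) : (countShiftedGe N (conjP σ) x : ℤ) + x = countShiftedGe N σ (-x) := by
  obtain ⟨hanti, hvan⟩ := hσ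
  obtain ⟨n, rfl | rfl⟩ := Int.eq_nat_or_neg x
  · exact countShiftedGe_add_eq_of_galois (fun i j => (succ_le_conjP_iff hanti hvan i j).symm)
      hvan (by omega)
  · have := countShiftedGe_add_eq_of_galois (fun i j => succ_le_conjP_iff hanti hvan j i)
      (fun _ => conjP_eq_zero hanti hvan h0) (n := n) (by omega)
    rw [neg_neg]
    omega

end CountShiftedGe

def starSeq (N : ℕ) (s : ℤ) (α β : ℕ → ℕ) (k : ℕ) : ℕ :=
  ((α k : ℤ) - (k + 1) + s + countShiftedGe N β ((α k : ℤ) - (k + 1) + s)).toNat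

section StarSeq

variable {N : ℕ} {α β : ℕ → ℕ}

lemma lamStarN_eq_starSeq : lamStarN N α β = starSeq N 0 α β := by
  funext k
  simp only [lamStarN, lamStar, starSeq, countShiftedGe, add_zero]

lemma rhoStarN_eq_starSeq : rhoStarN N α β = starSeq N 1 β α := by
  funext j
  simp only [rhoStarN, rhoStar, starSeq, countShiftedGe, Int.lt_iff_add_one_le]

lemma starSeq_eq_countShiftedGe_conjP {s : ℤ} (hs₀ : 0 ≤ s) (hs₁ : s ≤ 1) (hβ : IsPartitionN N β)
    (hβ0 : β 0 ≤ N) {m : ℕ} (hαm : α m ≤ N) (hm : m < N) :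
    starSeq N s α β m = countShiftedGe N (conjP β) (-((α m : ℤ) - (m + 1) + s)) := by
  have := countShiftedGe_conjP_add hβ hβ0 (x := -((α m : ℤ) - (m + 1) + s)) (by omega) (by omega)
  rw [starSeq, neg_neg] at *
  omega

lemma starSeq_conjP_conjP {s : ℤ} (hs₀ : 0 ≤ s) (hs₁ : s ≤ 1) (hα : IsPartitionN N α)
    (hβ : IsPartitionN N β) (hα0 : α 0 ≤ N) (hβ0 : β 0 ≤ N) (k : ℕ) :
    starSeq N s (conjP β) (conjP α) k = conjP (starSeq N s α β) k := by
  have hαle : ∀ m, α m ≤ N := fun m => (hα.1 (Nat.zero_le m)).trans hα0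
  have hvan : ∀ m, N ≤ m → starSeq N s α β m = 0 := fun m hm => by
    rw [starSeq, hα.2 m hm]
    have := countShiftedGe_le (N := N) (σ := β) (((0 : ℕ) : ℤ) - (m + 1) + s)
    omega
  rw [conjP_eq_card_filter_range hvan]
  rcases lt_or_ge k N with hk | hk
  · have hlhs : starSeq N s (conjP β) (conjP α) k =
        countShiftedGe N α (-((conjP β k : ℤ) - (k + 1) + s)) := by
      have := conjP_le hβ.2 k
      have := countShiftedGe_conjP_add hα hα0 (x := (conjP β k : ℤ) - (k + 1) + s) (by omega)
        (by omega)
      rw [starSeq]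
      omega
    rw [hlhs, countShiftedGe]
    refine congrArg card (filter_congr fun m hm => ?_)
    rw [starSeq_eq_countShiftedGe_conjP hs₀ hs₁ hβ hβ0 (hαle m) (mem_range.1 hm),
      succ_le_countShiftedGe_iff (antitone_conjP hβ.2) hk]
    omega
  · have hempty : {m ∈ range N | k + 1 ≤ starSeq N s α β m} = ∅ := by
      refine filter_eq_empty_iff.2 fun m hm => ?_
      rw [starSeq_eq_countShiftedGe_conjP hs₀ hs₁ hβ hβ0 (hαle m) (mem_range.1 hm)]
      have := countShiftedGe_le (N := N) (σ := conjP β) (-((α m : ℤ) - (m + 1) + s))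
      omega
    rw [hempty, card_empty, starSeq, conjP_eq_zero hβ.1 hβ.2 hβ0 hk]
    have := countShiftedGe_le (N := N) (σ := conjP α) (((0 : ℕ) : ℤ) - (k + 1) + s)
    omega

end StarSeq

/-- Compatibility of the `*`-operation with conjugation: with all partitions
padded to `N` parts, `N ≥ μ_1`, `N ≥ ν_1`, one has `λ(ν′,μ′) = λ(μ,ν)′` and
`ρ(ν′,μ′) = ρ(μ,ν)′`. -/
theorem star_conjugate (N : ℕ) (μ ν : ℕ → ℕ)
    (hμ : IsPartitionN N μ) (hν : IsPartitionN N ν)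
    (hμ1 : μ 0 ≤ N) (hν1 : ν 0 ≤ N) :
    (∀ k, lamStarN N (conjP ν) (conjP μ) k = conjP (lamStarN N μ ν) k) ∧
    (∀ k, rhoStarN N (conjP ν) (conjP μ) k = conjP (rhoStarN N μ ν) k) := by
  simp only [lamStarN_eq_starSeq, rhoStarN_eq_starSeq]
  exact ⟨starSeq_conjP_conjP le_rfl zero_le_one hμ hν hμ1 hν1,
    starSeq_conjP_conjP zero_le_one le_rfl hν hμ hν1 hμ1⟩
end

section
/- (Image of (0, ν) under the *-operation.) Let ν be any partition with n parts, and let 0 denote the partition with n zero parts. Then ρ(0,ν)_i = ν_i − (i−1) for 1 ≤ i ≤ k and ρ(0,ν)_i = 0 for i > k, where k = max{ i : ν_i − (i−1) ≥ 1 } (k = 0 if ν = 0); and the conjugate of λ(0,ν) satisfies λ(0,ν)′_i = ν′_i − i for 1 ≤ i ≤ m and λ(0,ν)′_i = 0 for i > m, where m = max{ i : ν′_i − i ≥ 1 }. -/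

lemma lower_eq_Iio (S : Set ℕ) (hfin : S.Finite)
    (hlow : ∀ a b : ℕ, a ≤ b → b ∈ S → a ∈ S) : S = Set.Iio S.ncard := by
  ext x
  simp only [Set.mem_Iio]
  constructor
  · intro hx
    have hsub : (Set.Iio (x + 1)) ⊆ S := fun y hy => hlow y x (Nat.lt_succ_iff.mp hy) hx
    have hle := Set.ncard_le_ncard hsub hfin
    rw [show Set.Iio (x + 1) = ↑(Finset.range (x + 1)) from (Finset.coe_range _).symm,
      Set.ncard_coe_finset, Finset.card_range] at hle
    omega
  · intro hx
    by_contra hxS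
    have hsub : S ⊆ Set.Iio x := by
      intro y hy
      by_contra hyx
      exact hxS (hlow x y (le_of_not_gt hyx) hy)
    have hle := Set.ncard_le_ncard hsub (Set.finite_Iio x)
    rw [show Set.Iio x = ↑(Finset.range x) from (Finset.coe_range _).symm,
      Set.ncard_coe_finset, Finset.card_range] at hle
    omega

lemma lamStar_ge_iff (n : ℕ) (ν : ℕ → ℕ) (hν : IsPartitionN n ν) (i k : ℕ) :
    ((i : ℤ) + 1 ≤ lamStar n (fun _ => 0) ν k) ↔ i + 1 ≤ ν (k + i + 1) := by
  obtain ⟨hmono, hzero⟩ := hν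
  have hS : lamStar n (fun _ => 0) ν k = (0 : ℤ) - ((k : ℤ) + 1) +
      ((Finset.range n).filter (fun j => (0 : ℤ) - ((k : ℤ) + 1) ≤ (ν j : ℤ) - (j + 1))).card := by
    simp [lamStar]
  set S := (Finset.range n).filter (fun j => (0 : ℤ) - ((k : ℤ) + 1) ≤ (ν j : ℤ) - (j + 1)) with hSdef
  have hmem : ∀ j, j ∈ S ↔ j < n ∧ j ≤ ν j + k := by
    intro j
    simp only [hSdef, Finset.mem_filter, Finset.mem_range]
    omega
  have hcard : ((i : ℤ) + 1 ≤ lamStar n (fun _ => 0) ν k) ↔ k + i + 2 ≤ S.card := by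
    rw [hS]; omega
  rw [hcard]
  constructor
  · intro h
    by_contra hlt
    have hb : ∀ j ∈ S, j < k + i + 1 := by
      intro j hj
      rw [hmem] at hj
      by_contra hge
      have := hmono (show k + i + 1 ≤ j by omega)
      omega
    have := Finset.card_le_card (fun j hj => Finset.mem_range.mpr (hb j hj))
    rw [Finset.card_range] at this
    omega
  · intro h
    have hn : k + i + 1 < n := by
      by_contra hge
      have := hzero (k + i + 1) (by omega)
      omega
    have hsub : Finset.range (k + i + 2) ⊆ S := by
      intro j hj
      rw [Finset.mem_range] at hj
      rw [hmem]
      refine ⟨by omega, ?_⟩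
      rcases le_or_gt j k with h1 | h1
      · omega
      · have := hmono (show j ≤ k + i + 1 by omega)
        omega
    have := Finset.card_le_card hsub
    rw [Finset.card_range] at this
    omega

/-- The image of `(0,ν)` under the `*`-operation: `ρ(0,ν) = (ν_1, ν_2 − 1, …,
ν_k − (k−1))` with `k = max{i : ν_i − (i−1) ≥ 1}`, and `λ(0,ν)′ = (ν′_1 − 1,
ν′_2 − 2, …, ν′_m − m)` with `m = max{i : ν′_i − i ≥ 1}` (0-indexed below). -/
theorem star_of_empty_left (n : ℕ) (ν : ℕ → ℕ) (hν : IsPartitionN n ν)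
    (k m : ℕ)
    (hk : ∀ i : ℕ, i < k ↔ 1 ≤ (ν i : ℤ) - i)
    (hm : ∀ i : ℕ, i < m ↔ 1 ≤ (conjP ν i : ℤ) - (i + 1)) :
    (∀ i, i < k → rhoStar n (fun _ => 0) ν i = (ν i : ℤ) - i) ∧
    (∀ i, k ≤ i → i < n → rhoStar n (fun _ => 0) ν i = 0) ∧
    (∀ i, i < m →
      (conjP (lamStarN n (fun _ => 0) ν) i : ℤ) = (conjP ν i : ℤ) - (i + 1)) ∧
    (∀ i, m ≤ i → conjP (lamStarN n (fun _ => 0) ν) i = 0) := by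
  obtain ⟨hmono, hzero⟩ := hν
  have key : ∀ i : ℕ, conjP (lamStarN n (fun _ => 0) ν) i = conjP ν i - (i + 1) := by
    intro i
    have hAfin : {j : ℕ | i + 1 ≤ ν j}.Finite := by
      apply Set.Finite.subset (Set.finite_Iio n)
      intro j hj
      simp only [Set.mem_setOf_eq] at hj
      simp only [Set.mem_Iio]
      by_contra hge
      have := hzero j (by omega)
      omega
    have hAlow : ∀ a b : ℕ, a ≤ b → b ∈ {j : ℕ | i + 1 ≤ ν j} → a ∈ {j : ℕ | i + 1 ≤ ν j} :=
      fun a b hab hb => le_trans hb (hmono hab)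
    have hA : {j : ℕ | i + 1 ≤ ν j} = Set.Iio (conjP ν i) := by
      rw [conjP]
      exact lower_eq_Iio _ hAfin hAlow
    have hset : {κ : ℕ | i + 1 ≤ lamStarN n (fun _ => 0) ν κ} =
        Set.Iio (conjP ν i - (i + 1)) := by
      ext κ
      simp only [Set.mem_setOf_eq, Set.mem_Iio]
      have h1 : i + 1 ≤ lamStarN n (fun _ => 0) ν κ ↔
          (i : ℤ) + 1 ≤ lamStar n (fun _ => 0) ν κ := by
        rw [lamStarN]
        constructor
        · intro h
          have := Int.lt_toNat.mp (show i < (lamStar n (fun _ => 0) ν κ).toNat by omega)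
          omega
        · intro h
          have : i < (lamStar n (fun _ => 0) ν κ).toNat := Int.lt_toNat.mpr (by omega)
          omega
      rw [h1, lamStar_ge_iff n ν ⟨hmono, hzero⟩ i κ]
      have h2 : i + 1 ≤ ν (κ + i + 1) ↔ κ + i + 1 ∈ {j : ℕ | i + 1 ≤ ν j} := Iff.rfl
      rw [h2, hA, Set.mem_Iio]
      omega
    rw [conjP, hset, show Set.Iio (conjP ν i - (i + 1)) =
      ↑(Finset.range (conjP ν i - (i + 1))) from (Finset.coe_range _).symm,
      Set.ncard_coe_finset, Finset.card_range]
  refine ⟨?_, ?_, ?_, ?_⟩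
  · intro i hi
    have h1 : 1 ≤ (ν i : ℤ) - i := (hk i).mp hi
    have hemp : (Finset.range n).filter
        (fun c : ℕ => (ν i : ℤ) - ((i : ℤ) + 1) < (((fun _ => 0) c : ℕ) : ℤ) - ((c : ℤ) + 1)) = ∅ := by
      apply Finset.filter_eq_empty_iff.mpr
      intro c _
      simp only
      omega
    rw [rhoStar, hemp]
    simp
    omega
  · intro i hik hin
    have h1 : ¬ (1 ≤ (ν i : ℤ) - i) := fun h => by have := (hk i).mpr h; omega
    have hle : ν i ≤ i := by omega
    have hfil : (Finset.range n).filter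
        (fun c : ℕ => (ν i : ℤ) - ((i : ℤ) + 1) < (((fun _ => 0) c : ℕ) : ℤ) - ((c : ℤ) + 1)) =
        Finset.range (i - ν i) := by
      ext c
      simp only [Finset.mem_filter, Finset.mem_range]
      omega
    rw [rhoStar, hfil, Finset.card_range]
    omega
  · intro i hi
    have h1 : 1 ≤ (conjP ν i : ℤ) - (i + 1) := (hm i).mp hi
    have := key i
    omega
  · intro i hi
    have h1 : ¬ (1 ≤ (conjP ν i : ℤ) - (i + 1)) := fun h => by have := (hm i).mpr h; omega
    have := key i
    omega
end

section
/- (Dominance for unions.) Let μ and ν be partitions with n parts and (λ, ρ) = (λ(μ,ν), ρ(μ,ν)). Then λ ∪ ρ ⪯ μ ∪ ν in dominance order, where σ ∪ τ denotes the partition obtained by sorting all 2n parts of σ and τ together in weakly decreasing order. -/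
/-- The multiset union `σ ∪ τ` of the first `n` parts, sorted weakly decreasingly. -/
def unionSorted (n : ℕ) (σ τ : ℕ → ℕ) : List ℕ :=
  (Multiset.map σ (Finset.range n).val + Multiset.map τ (Finset.range n).val).sort (· ≥ ·)


section StarDominanceAux

/-- If `q` is downward closed and its filter on `range n` has `c ≥ 1` elements,
then `q (c-1)` holds. -/
private lemma auxFilterHead {n c : ℕ} {q : ℕ → Prop} [DecidablePred q]
    (hq : ∀ i j : ℕ, i ≤ j → q j → q i)
    (hc : ((Finset.range n).filter q).card = c) (hc1 : 1 ≤ c) : q (c - 1) := by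
  by_contra h
  have hsub : (Finset.range n).filter q ⊆ Finset.range (c - 1) := by
    intro j hj
    simp only [Finset.mem_filter, Finset.mem_range] at hj ⊢
    by_contra hj2
    exact h (hq _ _ (by omega) hj.2)
  have := Finset.card_le_card hsub
  rw [hc, Finset.card_range] at this
  omega

private lemma lamStar_nonneg {n : ℕ} {μ ν : ℕ → ℕ} {k : ℕ} (_hk : k < n) :
    0 ≤ lamStar n μ ν k := by
  have hsub : Finset.range (k + 1 - μ k) ⊆
      (Finset.range n).filter (fun j => (μ k : ℤ) - (k + 1) ≤ (ν j : ℤ) - (j + 1)) := by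
    intro j hj
    rw [Finset.mem_range] at hj
    rw [Finset.mem_filter, Finset.mem_range]
    have : (0:ℤ) ≤ (ν j : ℤ) := Int.ofNat_nonneg _
    constructor
    · omega
    · omega
  have hcard := Finset.card_le_card hsub
  rw [Finset.card_range] at hcard
  unfold lamStar
  omega

private lemma rhoStar_nonneg {n : ℕ} {μ ν : ℕ → ℕ} {j : ℕ} (_hj : j < n) :
    0 ≤ rhoStar n μ ν j := by
  have hsub : Finset.range (j - ν j) ⊆
      (Finset.range n).filter (fun k => (ν j : ℤ) - (j + 1) < (μ k : ℤ) - (k + 1)) := by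
    intro k hk
    rw [Finset.mem_range] at hk
    rw [Finset.mem_filter, Finset.mem_range]
    have : (0:ℤ) ≤ (μ k : ℤ) := Int.ofNat_nonneg _
    constructor
    · omega
    · omega
  have hcard := Finset.card_le_card hsub
  rw [Finset.card_range] at hcard
  unfold rhoStar
  omega

private lemma lamStar_trunc {n : ℕ} {μ ν : ℕ → ℕ} (hν : Antitone ν) (t : ℕ)
    {k : ℕ} (hk : k < n) :
    lamStar n μ ν k - t ≤ lamStar n (fun i => μ i - t) (fun i => ν i - t) k := by
  classical
  have hdn : ((Finset.range n).filter
      (fun j => (μ k : ℤ) - (k + 1) ≤ (ν j : ℤ) - (j + 1))).card ≤ n := by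
    calc ((Finset.range n).filter _).card ≤ (Finset.range n).card :=
          Finset.card_filter_le _ _
      _ = n := Finset.card_range n
  rcases le_or_gt t (μ k) with ht | ht
  · -- `t ≤ μ k`: the filter only grows
    have hsub : (Finset.range n).filter
          (fun j => (μ k : ℤ) - (k + 1) ≤ (ν j : ℤ) - (j + 1)) ⊆
        (Finset.range n).filter
          (fun j => ((μ k - t : ℕ) : ℤ) - (k + 1) ≤ ((ν j - t : ℕ) : ℤ) - (j + 1)) := by
      intro j hj
      simp only [Finset.mem_filter, Finset.mem_range] at hj ⊢
      refine ⟨hj.1, ?_⟩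
      have h1 := hj.2
      omega
    have hcard := Finset.card_le_card hsub
    simp only [lamStar]
    omega
  · by_cases he : ((((Finset.range n).filter
        (fun j => (μ k : ℤ) - (k + 1) ≤ (ν j : ℤ) - (j + 1))).card : ℤ)) ≤ (t : ℤ) - μ k
    · have h0 : (0:ℤ) ≤ (((Finset.range n).filter
          (fun j => ((μ k - t : ℕ) : ℤ) - (k + 1) ≤ ((ν j - t : ℕ) : ℤ) - (j + 1))).card : ℤ) :=
        Int.ofNat_nonneg _
      simp only [lamStar]
      omega
    · set c := ((Finset.range n).filter
        (fun j => (μ k : ℤ) - (k + 1) ≤ (ν j : ℤ) - (j + 1))).card with hc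
      have hc1 : 1 ≤ c := by omega
      have hq : (μ k : ℤ) - (k + 1) ≤ (ν (c - 1) : ℤ) - ((c - 1 : ℕ) + 1) :=
        auxFilterHead (q := fun j => (μ k : ℤ) - (k + 1) ≤ (ν j : ℤ) - (j + 1))
          (fun i j hij hj => by
            have := hν hij
            have h2 : ((ν j : ℤ)) ≤ (ν i : ℤ) := by exact_mod_cast this
            omega) hc.symm hc1
      have hsub : Finset.range (c + μ k - t) ⊆
          (Finset.range n).filter
            (fun j => ((μ k - t : ℕ) : ℤ) - (k + 1) ≤ ((ν j - t : ℕ) : ℤ) - (j + 1)) := by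
        intro j hj
        rw [Finset.mem_range] at hj
        have hνj : ν (c - 1) ≤ ν j := hν (by omega)
        rw [Finset.mem_filter, Finset.mem_range]
        refine ⟨by omega, ?_⟩
        rcases le_or_gt j k with h | h
        · omega
        · omega
      have hcard := Finset.card_le_card hsub
      rw [Finset.card_range] at hcard
      simp only [lamStar]
      omega

private lemma rhoStar_trunc {n : ℕ} {μ ν : ℕ → ℕ} (hμ : Antitone μ) (t : ℕ)
    {j : ℕ} (hj : j < n) :
    rhoStar n μ ν j - t ≤ rhoStar n (fun i => μ i - t) (fun i => ν i - t) j := by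
  classical
  have hdn : ((Finset.range n).filter
      (fun k => (ν j : ℤ) - (j + 1) < (μ k : ℤ) - (k + 1))).card ≤ n := by
    calc ((Finset.range n).filter _).card ≤ (Finset.range n).card :=
          Finset.card_filter_le _ _
      _ = n := Finset.card_range n
  rcases le_or_gt t (ν j) with ht | ht
  · have hsub : (Finset.range n).filter
          (fun k => (ν j : ℤ) - (j + 1) < (μ k : ℤ) - (k + 1)) ⊆
        (Finset.range n).filter
          (fun k => ((ν j - t : ℕ) : ℤ) - (j + 1) < ((μ k - t : ℕ) : ℤ) - (k + 1)) := by
      intro k hk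
      simp only [Finset.mem_filter, Finset.mem_range] at hk ⊢
      refine ⟨hk.1, ?_⟩
      have h1 := hk.2
      omega
    have hcard := Finset.card_le_card hsub
    simp only [rhoStar]
    omega
  · by_cases he : ((((Finset.range n).filter
        (fun k => (ν j : ℤ) - (j + 1) < (μ k : ℤ) - (k + 1))).card : ℤ)) ≤ (t : ℤ) - ν j
    · have h0 : (0:ℤ) ≤ (((Finset.range n).filter
          (fun k => ((ν j - t : ℕ) : ℤ) - (j + 1) < ((μ k - t : ℕ) : ℤ) - (k + 1))).card : ℤ) :=
        Int.ofNat_nonneg _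
      simp only [rhoStar]
      omega
    · set d := ((Finset.range n).filter
        (fun k => (ν j : ℤ) - (j + 1) < (μ k : ℤ) - (k + 1))).card with hd
      have hd1 : 1 ≤ d := by omega
      have hq : (ν j : ℤ) - (j + 1) < (μ (d - 1) : ℤ) - ((d - 1 : ℕ) + 1) :=
        auxFilterHead (q := fun k => (ν j : ℤ) - (j + 1) < (μ k : ℤ) - (k + 1))
          (fun i k hik hk => by
            have := hμ hik
            have h2 : ((μ k : ℤ)) ≤ (μ i : ℤ) := by exact_mod_cast this
            omega) hd.symm hd1
      have hsub : Finset.range (d + ν j - t) ⊆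
          (Finset.range n).filter
            (fun k => ((ν j - t : ℕ) : ℤ) - (j + 1) < ((μ k - t : ℕ) : ℤ) - (k + 1)) := by
        intro k hk
        rw [Finset.mem_range] at hk
        have hμk : μ (d - 1) ≤ μ k := hμ (by omega)
        rw [Finset.mem_filter, Finset.mem_range]
        refine ⟨by omega, ?_⟩
        rcases le_or_gt j k with h | h
        · omega
        · omega
      have hcard := Finset.card_le_card hsub
      rw [Finset.card_range] at hcard
      simp only [rhoStar]
      omega

private lemma sum_range_cast_succ (n : ℕ) :
    2 * (∑ k ∈ Finset.range n, ((k : ℤ) + 1)) = n * (n + 1) := by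
  induction n with
  | zero => simp
  | succ m ih =>
    rw [Finset.sum_range_succ]
    push_cast
    push_cast at ih
    linear_combination ih

private lemma starSumEq (n : ℕ) (μ ν : ℕ → ℕ) :
    ((∑ k ∈ Finset.range n, lamStar n μ ν k) + ∑ j ∈ Finset.range n, rhoStar n μ ν j)
      = (∑ k ∈ Finset.range n, (μ k : ℤ)) + ∑ j ∈ Finset.range n, (ν j : ℤ) := by
  classical
  have hpair : (∑ k ∈ Finset.range n,
        ((((Finset.range n).filter
          (fun j => (μ k : ℤ) - (k + 1) ≤ (ν j : ℤ) - (j + 1))).card : ℤ)))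
      + (∑ j ∈ Finset.range n,
        ((((Finset.range n).filter
          (fun k => (ν j : ℤ) - (j + 1) < (μ k : ℤ) - (k + 1))).card : ℤ)))
      = (n : ℤ) * n := by
    have e1 : ∀ k, ((((Finset.range n).filter
          (fun j => (μ k : ℤ) - (k + 1) ≤ (ν j : ℤ) - (j + 1))).card : ℤ))
        = ∑ j ∈ Finset.range n,
            (if (μ k : ℤ) - (k + 1) ≤ (ν j : ℤ) - (j + 1) then (1:ℤ) else 0) := by
      intro k
      rw [Finset.card_filter]
      push_cast
      rfl
    have e2 : ∀ j, ((((Finset.range n).filter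
          (fun k => (ν j : ℤ) - (j + 1) < (μ k : ℤ) - (k + 1))).card : ℤ))
        = ∑ k ∈ Finset.range n,
            (if (ν j : ℤ) - (j + 1) < (μ k : ℤ) - (k + 1) then (1:ℤ) else 0) := by
      intro j
      rw [Finset.card_filter]
      push_cast
      rfl
    calc (∑ k ∈ Finset.range n,
        ((((Finset.range n).filter
          (fun j => (μ k : ℤ) - (k + 1) ≤ (ν j : ℤ) - (j + 1))).card : ℤ)))
      + (∑ j ∈ Finset.range n,
        ((((Finset.range n).filter
          (fun k => (ν j : ℤ) - (j + 1) < (μ k : ℤ) - (k + 1))).card : ℤ)))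
        = (∑ k ∈ Finset.range n, ∑ j ∈ Finset.range n,
            (if (μ k : ℤ) - (k + 1) ≤ (ν j : ℤ) - (j + 1) then (1:ℤ) else 0))
          + (∑ j ∈ Finset.range n, ∑ k ∈ Finset.range n,
            (if (ν j : ℤ) - (j + 1) < (μ k : ℤ) - (k + 1) then (1:ℤ) else 0)) := by
          rw [Finset.sum_congr rfl (fun k _ => e1 k), Finset.sum_congr rfl (fun j _ => e2 j)]
      _ = (∑ k ∈ Finset.range n, ∑ j ∈ Finset.range n,
            (if (μ k : ℤ) - (k + 1) ≤ (ν j : ℤ) - (j + 1) then (1:ℤ) else 0))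
          + (∑ k ∈ Finset.range n, ∑ j ∈ Finset.range n,
            (if (ν j : ℤ) - (j + 1) < (μ k : ℤ) - (k + 1) then (1:ℤ) else 0)) := by
          congr 1
          exact Finset.sum_comm
      _ = ∑ k ∈ Finset.range n, ∑ j ∈ Finset.range n, (1:ℤ) := by
          rw [← Finset.sum_add_distrib]
          refine Finset.sum_congr rfl (fun k _ => ?_)
          rw [← Finset.sum_add_distrib]
          refine Finset.sum_congr rfl (fun j _ => ?_)
          rcases le_or_gt ((μ k : ℤ) - (k + 1)) ((ν j : ℤ) - (j + 1)) with h | h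
          · rw [if_pos h, if_neg (not_lt.mpr h)]; norm_num
          · rw [if_neg (not_le.mpr h), if_pos h]; norm_num
      _ = (n : ℤ) * n := by
          simp [Finset.sum_const, Finset.card_range, mul_comm]
  have hg := sum_range_cast_succ n
  have hnn : (n : ℤ) * (n + 1) = n * n + n := by ring
  simp only [Finset.sum_add_distrib, Finset.sum_const, Finset.card_range,
    nsmul_eq_mul, mul_one] at hg
  simp only [lamStar, rhoStar, Finset.sum_add_distrib, Finset.sum_sub_distrib,
    Finset.sum_const, Finset.card_range, nsmul_eq_mul, mul_one]
  linarith [hpair, hg, hnn]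

private lemma key_ineq (n : ℕ) (μ ν : ℕ → ℕ) (hμ : IsPartitionN n μ)
    (hν : IsPartitionN n ν) (t : ℕ) :
    ((∑ k ∈ Finset.range n, (lamStarN n μ ν k - t))
        + ∑ j ∈ Finset.range n, (rhoStarN n μ ν j - t))
      ≤ (∑ k ∈ Finset.range n, (μ k - t)) + ∑ j ∈ Finset.range n, (ν j - t) := by
  have hL : ∀ k ∈ Finset.range n, ((lamStarN n μ ν k - t : ℕ) : ℤ)
      ≤ lamStar n (fun i => μ i - t) (fun i => ν i - t) k := by
    intro k hk
    rw [Finset.mem_range] at hk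
    have h1 := lamStar_trunc (n := n) (μ := μ) hν.1 t hk
    have h2 := lamStar_nonneg (n := n) (μ := fun i => μ i - t) (ν := fun i => ν i - t) hk
    simp only [lamStarN] at *
    omega
  have hR : ∀ j ∈ Finset.range n, ((rhoStarN n μ ν j - t : ℕ) : ℤ)
      ≤ rhoStar n (fun i => μ i - t) (fun i => ν i - t) j := by
    intro j hj
    rw [Finset.mem_range] at hj
    have h1 := rhoStar_trunc (n := n) (ν := ν) hμ.1 t hj
    have h2 := rhoStar_nonneg (n := n) (μ := fun i => μ i - t) (ν := fun i => ν i - t) hj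
    simp only [rhoStarN] at *
    omega
  rw [← Nat.cast_le (α := ℤ)]
  push_cast
  calc (∑ k ∈ Finset.range n, ((lamStarN n μ ν k - t : ℕ) : ℤ))
      + ∑ j ∈ Finset.range n, ((rhoStarN n μ ν j - t : ℕ) : ℤ)
      ≤ (∑ k ∈ Finset.range n, lamStar n (fun i => μ i - t) (fun i => ν i - t) k)
        + ∑ j ∈ Finset.range n, rhoStar n (fun i => μ i - t) (fun i => ν i - t) j :=
        add_le_add (Finset.sum_le_sum hL) (Finset.sum_le_sum hR)
    _ = (∑ k ∈ Finset.range n, (((fun i => μ i - t) k : ℕ) : ℤ))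
        + ∑ j ∈ Finset.range n, (((fun i => ν i - t) j : ℕ) : ℤ) :=
        starSumEq n (fun i => μ i - t) (fun i => ν i - t)
    _ = (∑ k ∈ Finset.range n, ((μ k - t : ℕ) : ℤ))
        + ∑ j ∈ Finset.range n, ((ν j - t : ℕ) : ℤ) := rfl

private lemma take_sum_le_aux (l : List ℕ) (k t : ℕ) :
    (l.take k).sum ≤ k * t + (l.map (fun x => x - t)).sum := by
  induction l generalizing k with
  | nil => simp
  | cons x xs ih =>
    cases k with
    | zero => simp
    | succ m =>
      simp only [List.take_succ_cons, List.sum_cons, List.map_cons]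
      have h1 := ih m
      have hx : x ≤ t + (x - t) := by omega
      have h2 : (m + 1) * t = m * t + t := by ring
      linarith

private lemma sorted_take_le (l : List ℕ) (hl : l.Pairwise (· ≥ ·)) (k : ℕ) :
    k * l.getD k 0 + (l.map (fun x => x - l.getD k 0)).sum ≤ (l.take k).sum := by
  induction l generalizing k with
  | nil => simp
  | cons x xs ih =>
    rw [List.pairwise_cons] at hl
    cases k with
    | zero =>
      simp only [List.getD_cons_zero, Nat.zero_mul, List.take_zero, List.sum_nil,
        Nat.zero_add, List.map_cons, List.sum_cons]
      have h0 : (xs.map (fun y => y - x)).sum = 0 := by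
        apply List.sum_eq_zero
        intro z hz
        obtain ⟨y, hy, rfl⟩ := List.mem_map.mp hz
        have := hl.1 y hy
        omega
      omega
    | succ m =>
      have hgd : (x :: xs).getD (m + 1) 0 = xs.getD m 0 := rfl
      rw [hgd]
      have ht : xs.getD m 0 ≤ x := by
        by_cases h : m < xs.length
        · have hmem : xs.getD m 0 ∈ xs := by
            rw [List.getD_eq_getElem _ _ h]
            exact List.getElem_mem h
          exact hl.1 _ hmem
        · rw [List.getD_eq_default _ _ (by omega)]
          exact Nat.zero_le x
      have h1 := ih hl.2 m
      simp only [List.take_succ_cons, List.sum_cons, List.map_cons]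
      have h2 : (m + 1) * xs.getD m 0 = m * xs.getD m 0 + xs.getD m 0 := by ring
      have h3 : xs.getD m 0 + (x - xs.getD m 0) = x := by omega
      linarith

private lemma unionSorted_map_sum (n : ℕ) (σ τ : ℕ → ℕ) (f : ℕ → ℕ) :
    ((unionSorted n σ τ).map f).sum
      = (∑ i ∈ Finset.range n, f (σ i)) + ∑ i ∈ Finset.range n, f (τ i) := by
  have h1 : ((unionSorted n σ τ : List ℕ) : Multiset ℕ)
      = Multiset.map σ (Finset.range n).val + Multiset.map τ (Finset.range n).val :=
    Multiset.sort_eq _ _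
  calc ((unionSorted n σ τ).map f).sum
      = (Multiset.map f ((unionSorted n σ τ : List ℕ) : Multiset ℕ)).sum := rfl
    _ = (Multiset.map f (Multiset.map σ (Finset.range n).val
          + Multiset.map τ (Finset.range n).val)).sum := by rw [h1]
    _ = (Multiset.map (fun i => f (σ i)) (Finset.range n).val).sum
        + (Multiset.map (fun i => f (τ i)) (Finset.range n).val).sum := by
          rw [Multiset.map_add, Multiset.sum_add, Multiset.map_map, Multiset.map_map]
          rfl
    _ = (∑ i ∈ Finset.range n, f (σ i)) + ∑ i ∈ Finset.range n, f (τ i) := rfl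

end StarDominanceAux

/-- Dominance for unions: `λ ∪ ρ ⪯ μ ∪ ν` in the dominance order, where
`σ ∪ τ` sorts all `2n` parts of `σ` and `τ` together in weakly decreasing
order. -/
theorem star_dominance_union (n : ℕ) (μ ν : ℕ → ℕ)
    (hμ : IsPartitionN n μ) (hν : IsPartitionN n ν) :
    ∀ k : ℕ,
      ((unionSorted n (lamStarN n μ ν) (rhoStarN n μ ν)).take k).sum ≤
        ((unionSorted n μ ν).take k).sum := by
  intro k
  set t := (unionSorted n μ ν).getD k 0 with hts
  have h1 := take_sum_le_aux (unionSorted n (lamStarN n μ ν) (rhoStarN n μ ν)) k t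
  have h2 := sorted_take_le (unionSorted n μ ν) (Multiset.pairwise_sort _ _) k
  have h3 : ((unionSorted n (lamStarN n μ ν) (rhoStarN n μ ν)).map (fun x => x - t)).sum
      ≤ ((unionSorted n μ ν).map (fun x => x - t)).sum := by
    rw [unionSorted_map_sum, unionSorted_map_sum]
    exact key_ineq n μ ν hμ hν t
  rw [← hts] at h2
  linarith
end

section
/- (Dominance for sums.) Let μ and ν be partitions with n parts and (λ, ρ) = (λ(μ,ν), ρ(μ,ν)). Then μ + ν ⪯ λ + ρ in dominance order, where (σ + τ)_i = σ_i + τ_i. Equivalently, for every i with 1 ≤ i ≤ n, Σ_{j=1}^{i} (λ_j + ρ_j) ≥ Σ_{j=1}^{i} (μ_j + ν_j). -/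
/-- Dominance for sums: `μ + ν ⪯ λ + ρ`, i.e. for every `1 ≤ i ≤ n`,
`Σ_{j=1}^{i} (λ_j + ρ_j) ≥ Σ_{j=1}^{i} (μ_j + ν_j)`. -/
theorem star_dominance_sum (n : ℕ) (μ ν : ℕ → ℕ)
    (hμ : IsPartitionN n μ) (hν : IsPartitionN n ν) :
    ∀ i, 1 ≤ i → i ≤ n →
      (∑ j ∈ Finset.range i, ((μ j : ℤ) + (ν j : ℤ))) ≤
        ∑ j ∈ Finset.range i, (lamStar n μ ν j + rhoStar n μ ν j) := by
  intro i hi1 hin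
  -- abbreviations
  have key : ∑ k ∈ Finset.range i,
      ((((Finset.range i).filter (fun j => (μ k : ℤ) - (k + 1) ≤ (ν j : ℤ) - (j + 1))).card : ℤ) +
       (((Finset.range i).filter (fun j => (ν k : ℤ) - (k + 1) < (μ j : ℤ) - (j + 1))).card : ℤ))
      = (i : ℤ) * i := by
    have swap : ∑ k ∈ Finset.range i,
        ((((Finset.range i).filter (fun j => (ν k : ℤ) - (k + 1) < (μ j : ℤ) - (j + 1))).card : ℤ))
        = ∑ k ∈ Finset.range i,
        ((((Finset.range i).filter (fun j => (ν j : ℤ) - (j + 1) < (μ k : ℤ) - (k + 1))).card : ℤ)) := by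
      simp only [Finset.card_filter]
      push_cast
      rw [Finset.sum_comm]
    rw [Finset.sum_add_distrib, swap, ← Finset.sum_add_distrib]
    have hpt : ∀ k ∈ Finset.range i,
        ((((Finset.range i).filter (fun j => (μ k : ℤ) - (k + 1) ≤ (ν j : ℤ) - (j + 1))).card : ℤ) +
         (((Finset.range i).filter (fun j => (ν j : ℤ) - (j + 1) < (μ k : ℤ) - (k + 1))).card : ℤ))
        = (i : ℤ) := by
      intro k _
      have hneg : (Finset.range i).filter
            (fun j => ¬ ((μ k : ℤ) - (k + 1) ≤ (ν j : ℤ) - (j + 1)))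
          = (Finset.range i).filter (fun j => (ν j : ℤ) - (j + 1) < (μ k : ℤ) - (k + 1)) := by
        apply Finset.filter_congr
        intro j _
        exact not_le
      have hc := Finset.card_filter_add_card_filter_not
        (s := Finset.range i) (p := fun j => (μ k : ℤ) - (k + 1) ≤ (ν j : ℤ) - (j + 1))
      rw [hneg, Finset.card_range] at hc
      exact_mod_cast hc
    rw [Finset.sum_congr rfl hpt, Finset.sum_const, Finset.card_range]
    push_cast; ring
  have hFG : (i : ℤ) * i ≤ ∑ k ∈ Finset.range i,
      ((((Finset.range n).filter (fun j => (μ k : ℤ) - (k + 1) ≤ (ν j : ℤ) - (j + 1))).card : ℤ) +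
       (((Finset.range n).filter (fun j => (ν k : ℤ) - (k + 1) < (μ j : ℤ) - (j + 1))).card : ℤ)) := by
    rw [← key]
    apply Finset.sum_le_sum
    intro k _
    have hsub : Finset.range i ⊆ Finset.range n := Finset.range_subset_range.mpr hin
    have h1 := Finset.card_le_card (Finset.filter_subset_filter
      (fun j => (μ k : ℤ) - (k + 1) ≤ (ν j : ℤ) - (j + 1)) hsub)
    have h2 := Finset.card_le_card (Finset.filter_subset_filter
      (fun j => (ν k : ℤ) - (k + 1) < (μ j : ℤ) - (j + 1)) hsub)
    have h1' : ((((Finset.range i).filter (fun j => (μ k : ℤ) - (k + 1) ≤ (ν j : ℤ) - (j + 1))).card : ℤ))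
        ≤ (((Finset.range n).filter (fun j => (μ k : ℤ) - (k + 1) ≤ (ν j : ℤ) - (j + 1))).card : ℤ) := by
      exact_mod_cast h1
    have h2' : ((((Finset.range i).filter (fun j => (ν k : ℤ) - (k + 1) < (μ j : ℤ) - (j + 1))).card : ℤ))
        ≤ (((Finset.range n).filter (fun j => (ν k : ℤ) - (k + 1) < (μ j : ℤ) - (j + 1))).card : ℤ) := by
      exact_mod_cast h2
    linarith
  have hgauss : ∑ k ∈ Finset.range i, (2 * (k : ℤ) + 1) = (i : ℤ) * i := by
    clear key hFG hin hi1
    induction i with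
    | zero => simp
    | succ m ih =>
      rw [Finset.sum_range_succ, ih]
      push_cast; ring
  have main : ∑ j ∈ Finset.range i, (lamStar n μ ν j + rhoStar n μ ν j)
      = (∑ j ∈ Finset.range i, ((μ j : ℤ) + (ν j : ℤ)))
        + (∑ k ∈ Finset.range i,
          ((((Finset.range n).filter (fun j => (μ k : ℤ) - (k + 1) ≤ (ν j : ℤ) - (j + 1))).card : ℤ) +
           (((Finset.range n).filter (fun j => (ν k : ℤ) - (k + 1) < (μ j : ℤ) - (j + 1))).card : ℤ)))
        - ∑ k ∈ Finset.range i, (2 * (k : ℤ) + 1) := by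
    rw [← Finset.sum_add_distrib, ← Finset.sum_sub_distrib]
    apply Finset.sum_congr rfl
    intro k _
    unfold lamStar rhoStar
    ring
  rw [main, hgauss]
  linarith
end

section
/- (Monotonicity under inclusion.) Let α, β, μ, ν be partitions with n parts such that α ⊆ μ and β ⊆ ν (componentwise inequality of parts). Then λ(α,β) ⊆ λ(μ,ν) and ρ(α,β) ⊆ ρ(μ,ν), i.e., λ(α,β)_k ≤ λ(μ,ν)_k and ρ(α,β)_k ≤ ρ(μ,ν)_k for every 1 ≤ k ≤ n. -/
/-!
Write `c_μ(k) = μ_k - k` for the content of the last box in row `k` (`μ k - (k + 1)` in the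
0-indexed encoding); it is strictly decreasing in `k` whenever `μ` is a partition. Then
`λ(μ,ν)_k = c_μ(k) + #{j : c_μ(k) ≤ c_ν(j)}`. Enlarging `ν` only enlarges the counted set.
Raising `c_μ(k)` from `x` to `y` loses at most the `j` with `c_ν(j) ∈ [x, y)`, and since the
`c_ν(j)` are distinct there are at most `y - x` of them, which the first summand makes up for.
The same argument, with the roles of `μ` and `ν` exchanged, applies to `ρ`.
-/

open Finset

section CountingAbove

variable {ι : Type*} (s : Finset ι) {w : ι → ℤ}

theorem monotone_add_card_filter_le [DecidableEq ι] (hw : Set.InjOn w s) :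
    Monotone fun x : ℤ => x + (#(s.filter (x ≤ w ·)) : ℤ) := by
  intro x y hxy
  have hsplit : s.filter (x ≤ w ·) ⊆ s.filter (y ≤ w ·) ∪ s.filter (w · ∈ Ico x y) := by
    intro j hj
    simp only [mem_union, mem_filter, mem_Ico] at hj ⊢
    obtain ⟨hjs, hxj⟩ := hj
    rcases le_or_gt y (w j) with hyj | hjy
    exacts [Or.inl ⟨hjs, hyj⟩, Or.inr ⟨hjs, hxj, hjy⟩]
  have hgap : #(s.filter (w · ∈ Ico x y)) ≤ #(Ico x y) :=
    card_le_card_of_injOn w (fun j hj => (mem_filter.1 hj).2) (hw.mono (filter_subset _ _))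
  have hunion := (card_le_card hsplit).trans (card_union_le _ _)
  rw [Int.card_Ico] at hgap
  simp only
  omega

theorem monotone_add_card_filter_lt [DecidableEq ι] (hw : Set.InjOn w s) :
    Monotone fun x : ℤ => x + (#(s.filter (x < w ·)) : ℤ) := by
  intro x y hxy
  have shift (z : ℤ) : s.filter (z < w ·) = s.filter (z + 1 ≤ w ·) :=
    filter_congr fun _ _ => Int.lt_iff_add_one_le
  have := monotone_add_card_filter_le s hw (by omega : x + 1 ≤ y + 1)
  simp only [shift] at this ⊢
  omega

theorem card_filter_le_mono {w' : ι → ℤ} (hww' : ∀ j, w j ≤ w' j) (x : ℤ) :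
    #(s.filter (x ≤ w ·)) ≤ #(s.filter (x ≤ w' ·)) :=
  card_le_card (monotone_filter_right s fun j _ hj => hj.trans (hww' j))

theorem card_filter_lt_mono {w' : ι → ℤ} (hww' : ∀ j, w j ≤ w' j) (x : ℤ) :
    #(s.filter (x < w ·)) ≤ #(s.filter (x < w' ·)) :=
  card_le_card (monotone_filter_right s fun j _ hj => hj.trans_le (hww' j))

end CountingAbove

def content_s11 (μ : ℕ → ℕ) (k : ℕ) : ℤ := (μ k : ℤ) - (k + 1)

theorem content_strictAnti {μ : ℕ → ℕ} (hμ : Antitone μ) : StrictAnti (content_s11 μ) := by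
  intro a b hab
  have := hμ hab.le
  simp only [content_s11]
  omega

theorem content_le_content {α μ : ℕ → ℕ} (hαμ : ∀ k, α k ≤ μ k) (k : ℕ) :
    content_s11 α k ≤ content_s11 μ k :=
  sub_le_sub_right (mod_cast hαμ k) _

theorem lamStar_eq (n : ℕ) (μ ν : ℕ → ℕ) (k : ℕ) :
    lamStar n μ ν k = content_s11 μ k + #((range n).filter (content_s11 μ k ≤ content_s11 ν ·)) := rfl

theorem rhoStar_eq (n : ℕ) (μ ν : ℕ → ℕ) (j : ℕ) :
    rhoStar n μ ν j = content_s11 ν j + #((range n).filter (content_s11 ν j < content_s11 μ ·)) + 1 := by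
  rw [rhoStar, content_s11, add_right_comm]
  rfl

theorem lamStar_mono {n : ℕ} {α β μ ν : ℕ → ℕ} (hν : Antitone ν)
    (hαμ : ∀ k, α k ≤ μ k) (hβν : ∀ k, β k ≤ ν k) (k : ℕ) :
    lamStar n α β k ≤ lamStar n μ ν k := by
  simp only [lamStar_eq]
  calc content_s11 α k + (#((range n).filter (content_s11 α k ≤ content_s11 β ·)) : ℤ)
      ≤ content_s11 α k + #((range n).filter (content_s11 α k ≤ content_s11 ν ·)) :=
        (add_le_add_iff_left _).2 (mod_cast card_filter_le_mono _ (content_le_content hβν) _)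
    _ ≤ content_s11 μ k + #((range n).filter (content_s11 μ k ≤ content_s11 ν ·)) :=
        monotone_add_card_filter_le _ (content_strictAnti hν).injective.injOn
          (content_le_content hαμ k)

theorem rhoStar_mono {n : ℕ} {α β μ ν : ℕ → ℕ} (hμ : Antitone μ)
    (hαμ : ∀ k, α k ≤ μ k) (hβν : ∀ k, β k ≤ ν k) (j : ℕ) :
    rhoStar n α β j ≤ rhoStar n μ ν j := by
  simp only [rhoStar_eq, add_le_add_iff_right]
  calc content_s11 β j + (#((range n).filter (content_s11 β j < content_s11 α ·)) : ℤ)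
      ≤ content_s11 β j + #((range n).filter (content_s11 β j < content_s11 μ ·)) :=
        (add_le_add_iff_left _).2 (mod_cast card_filter_lt_mono _ (content_le_content hαμ) _)
    _ ≤ content_s11 ν j + #((range n).filter (content_s11 ν j < content_s11 μ ·)) :=
        monotone_add_card_filter_lt _ (content_strictAnti hμ).injective.injOn
          (content_le_content hβν j)

theorem star_monotone_general (n : ℕ) (α β μ ν : ℕ → ℕ)
    (hμ : IsPartitionN n μ) (hν : IsPartitionN n ν)
    (hαμ : ∀ k, α k ≤ μ k) (hβν : ∀ k, β k ≤ ν k) :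
    (∀ k, k < n → lamStar n α β k ≤ lamStar n μ ν k) ∧
    (∀ k, k < n → rhoStar n α β k ≤ rhoStar n μ ν k) :=
  ⟨fun k _ => lamStar_mono hν.1 hαμ hβν k, fun j _ => rhoStar_mono hμ.1 hαμ hβν j⟩

/-- Monotonicity of the `*`-operation under componentwise inclusion:
`(α,β) ⊆ (μ,ν)` implies `λ(α,β) ⊆ λ(μ,ν)` and `ρ(α,β) ⊆ ρ(μ,ν)`. -/
theorem star_monotone (n : ℕ) (α β μ ν : ℕ → ℕ)
    (hα : IsPartitionN n α) (hβ : IsPartitionN n β)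
    (hμ : IsPartitionN n μ) (hν : IsPartitionN n ν)
    (hαμ : ∀ k, α k ≤ μ k) (hβν : ∀ k, β k ≤ ν k) :
    (∀ k, k < n → lamStar n α β k ≤ lamStar n μ ν k) ∧
    (∀ k, k < n → rhoStar n α β k ≤ rhoStar n μ ν k) :=
  star_monotone_general n α β μ ν hμ hν hαμ hβν
end

section
/- (The *-operation preserves pairs of hooks.) Let μ and ν be hook partitions (padded with zero parts to a common length n). Then each of λ(μ,ν) and ρ(μ,ν) is again a hook partition (or the empty partition). -/
/-- A hook partition: all parts after the first are at most `1`
(padded with zero parts to length `n`). -/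
def IsHookOrEmpty (n : ℕ) (μ : ℕ → ℕ) : Prop :=
  IsPartitionN n μ ∧ ∀ i, 1 ≤ i → μ i ≤ 1

/-- The `*`-operation preserves pairs of hooks: if `μ` and `ν` are hooks then
all parts of `λ(μ,ν)` and `ρ(μ,ν)` after the first are at most `1`, so each is
again a hook or the empty partition. -/
theorem star_preserves_hooks (n : ℕ) (μ ν : ℕ → ℕ)
    (hμ : IsHookOrEmpty n μ) (hν : IsHookOrEmpty n ν) :
    (∀ i, 1 ≤ i → i < n → lamStar n μ ν i ≤ 1) ∧
    (∀ i, 1 ≤ i → i < n → rhoStar n μ ν i ≤ 1) := by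
  obtain ⟨⟨hμa, hμ0⟩, hμh⟩ := hμ
  obtain ⟨⟨hνa, hν0⟩, hνh⟩ := hν
  constructor
  · intro i hi _
    have hμi : μ i ≤ 1 := hμh i hi
    have hsub : ((Finset.range n).filter
        (fun j => (μ i : ℤ) - (i + 1) ≤ (ν j : ℤ) - (j + 1))) ⊆
        Finset.range (i + 2 - μ i) := by
      intro j hj
      simp only [Finset.mem_filter, Finset.mem_range] at hj ⊢
      by_contra h
      push_neg at h
      have hj1 : (1 : ℕ) ≤ j := by omega
      have hν1 : ν j ≤ 1 := hνh j hj1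
      have := hj.2
      omega
    have hcard := Finset.card_le_card hsub
    rw [Finset.card_range] at hcard
    unfold lamStar
    omega
  · intro i hi _
    have hνi : ν i ≤ 1 := hνh i hi
    have hsub : ((Finset.range n).filter
        (fun k => (ν i : ℤ) - (i + 1) < (μ k : ℤ) - (k + 1))) ⊆
        Finset.range (i + 1 - ν i) := by
      intro k hk
      simp only [Finset.mem_filter, Finset.mem_range] at hk ⊢
      by_contra h
      push_neg at h
      have hk1 : (1 : ℕ) ≤ k := by omega
      have hμ1 : μ k ≤ 1 := hμh k hk1
      have := hk.2
      omega
    have hcard := Finset.card_le_card hsub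
    rw [Finset.card_range] at hcard
    unfold rhoStar
    omega
end

section
/- (The *-operation preserves pairs of two-row partitions.) Let μ and ν be partitions with n parts each having at most two nonzero parts (μ_k = ν_k = 0 for k ≥ 3). Then λ(μ,ν) and ρ(μ,ν) each have at most two nonzero parts. -/
/-- The `*`-operation preserves pairs of two-row partitions: if `μ` and `ν`
have at most two nonzero parts, so do `λ(μ,ν)` and `ρ(μ,ν)`. -/
theorem star_preserves_two_rows (n : ℕ) (μ ν : ℕ → ℕ)
    (hμ : IsPartitionN n μ) (hν : IsPartitionN n ν)
    (hμ2 : ∀ k, 2 ≤ k → μ k = 0) (hν2 : ∀ k, 2 ≤ k → ν k = 0) :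
    (∀ k, 2 ≤ k → k < n → lamStar n μ ν k = 0) ∧
    (∀ k, 2 ≤ k → k < n → rhoStar n μ ν k = 0) := by
  constructor
  · intro k hk hkn
    have hμk : μ k = 0 := hμ2 k hk
    have hset : ((Finset.range n).filter
        (fun j => (μ k : ℤ) - (k + 1) ≤ (ν j : ℤ) - (j + 1))) = Finset.range (k+1) := by
      ext j
      simp only [Finset.mem_filter, Finset.mem_range, hμk]
      constructor
      · rintro ⟨hjn, hle⟩
        by_contra h
        push_neg at h
        have hνj : ν j = 0 := hν2 j (by omega)
        rw [hνj] at hle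
        push_cast at hle
        omega
      · intro hj
        refine ⟨by omega, ?_⟩
        have : (0:ℤ) ≤ (ν j : ℤ) := Int.ofNat_nonneg _
        push_cast
        omega
    rw [lamStar, hset, Finset.card_range, hμk]
    push_cast
    ring
  · intro k hk hkn
    have hνk : ν k = 0 := hν2 k hk
    have hset : ((Finset.range n).filter
        (fun j => (ν k : ℤ) - (k + 1) < (μ j : ℤ) - (j + 1))) = Finset.range k := by
      ext j
      simp only [Finset.mem_filter, Finset.mem_range, hνk]
      constructor
      · rintro ⟨hjn, hlt⟩
        by_contra h
        push_neg at h
        have hμj : μ j = 0 := hμ2 j (by omega)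
        rw [hμj] at hlt
        push_cast at hlt
        omega
      · intro hj
        refine ⟨by omega, ?_⟩
        have : (0:ℤ) ≤ (μ j : ℤ) := Int.ofNat_nonneg _
        push_cast
        omega
    rw [rhoStar, hset, Finset.card_range, hνk]
    push_cast
    ring
end

section
/- (The *-operation preserves pairs of horizontal strips.) Let α, β, μ, ν be partitions with n parts such that α ⊆ μ, β ⊆ ν, and both μ/α and ν/β are horizontal strips, i.e., α_k ≥ μ_{k+1} and β_k ≥ ν_{k+1} for all 1 ≤ k < n. Then λ(α,β)_k ≥ λ(μ,ν)_{k+1} and ρ(α,β)_k ≥ ρ(μ,ν)_{k+1} for all 1 ≤ k < n; that is, the skew shapes λ(μ,ν)/λ(α,β) and ρ(μ,ν)/ρ(α,β) are again horizontal strips. -/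
private lemma filter_eq_range_card (n : ℕ) (P : ℕ → Prop) [DecidablePred P]
    (h : ∀ j j', j ≤ j' → j' < n → P j' → P j) :
    (Finset.range n).filter P = Finset.range ((Finset.range n).filter P).card := by
  induction n with
  | zero => simp
  | succ n ih =>
    rw [Finset.range_add_one, Finset.filter_insert]
    by_cases hP : P n
    · rw [if_pos hP]
      have hall : (Finset.range n).filter P = Finset.range n := by
        apply Finset.filter_true_of_mem
        intro j hj
        exact h j n (Nat.le_of_lt (Finset.mem_range.mp hj)) (Nat.lt_succ_self n) hP
      rw [hall, Finset.card_insert_of_notMem (by simp), Finset.card_range, ← Finset.range_add_one]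
    · rw [if_neg hP]
      exact ih (fun j j' hle hlt hp => h j j' hle (Nat.lt_succ_of_lt hlt) hp)

private lemma chain_le (n : ℕ) (y : ℕ → ℤ) (hy : ∀ j, j + 1 < n → y (j + 1) < y j) :
    ∀ d j, j + d < n → y (j + d) + d ≤ y j := by
  intro d
  induction d with
  | zero => intro j _; simp
  | succ d ih =>
    intro j h
    have h1 := hy (j + d) (by omega)
    have h2 := ih j (by omega)
    have e : j + (d + 1) = (j + d) + 1 := by omega
    rw [e]
    push_cast
    omega

private lemma key (n : ℕ) (y w : ℕ → ℤ) (M A : ℤ)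
    (hy : ∀ j, j + 1 < n → y (j + 1) < y j)
    (hw : ∀ j, j + 1 < n → w (j + 1) < w j)
    (hwy : ∀ j, j < n → w j ≤ y j)
    (hstrip : ∀ j, j + 1 < n → y (j + 1) + 1 ≤ w j)
    (hMA : M + 1 ≤ A) :
    M + ((Finset.range n).filter (fun j => M ≤ y j)).card ≤
      A + ((Finset.range n).filter (fun j => A ≤ w j)).card := by
  set S := (Finset.range n).filter (fun j => M ≤ y j) with hS
  set T := (Finset.range n).filter (fun j => A ≤ w j) with hT
  have hdownS : ∀ j j', j ≤ j' → j' < n → M ≤ y j' → M ≤ y j := by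
    intro j j' hle hlt hM
    have h1 := chain_le n y hy (j' - j) j (by omega)
    have e : j + (j' - j) = j' := by omega
    rw [e] at h1
    omega
  have hdownT : ∀ j j', j ≤ j' → j' < n → A ≤ w j' → A ≤ w j := by
    intro j j' hle hlt hA
    have h1 := chain_le n w hw (j' - j) j (by omega)
    have e : j + (j' - j) = j' := by omega
    rw [e] at h1
    omega
  have hSeq : S = Finset.range S.card := by
    rw [hS]; exact filter_eq_range_card n _ hdownS
  have hTeq : T = Finset.range T.card := by
    rw [hT]; exact filter_eq_range_card n _ hdownT
  set s := S.card with hs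
  set t := T.card with ht
  have hTS : T ⊆ S := by
    intro j hj
    rw [hT, Finset.mem_filter] at hj
    rw [hS, Finset.mem_filter]
    refine ⟨hj.1, ?_⟩
    have := hwy j (Finset.mem_range.mp hj.1)
    omega
  have hts : t ≤ s := Finset.card_le_card hTS
  have hsn : s ≤ n := by
    calc S.card ≤ (Finset.range n).card := Finset.card_le_card (Finset.filter_subset _ _)
    _ = n := Finset.card_range n
  by_cases hcase : s ≤ t + 1
  · omega
  · push_neg at hcase
    have h1 : M ≤ y (s - 1) := by
      have hmem : s - 1 ∈ S := by rw [hSeq]; exact Finset.mem_range.mpr (by omega)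
      rw [hS, Finset.mem_filter] at hmem
      exact hmem.2
    have h2 : ¬ (A ≤ w t) := by
      intro hA
      have hmem : t ∈ T := by
        rw [hT, Finset.mem_filter]
        exact ⟨Finset.mem_range.mpr (by omega), hA⟩
      rw [hTeq] at hmem
      exact absurd (Finset.mem_range.mp hmem) (lt_irrefl t)
    have h3 : y (t + 1) + 1 ≤ w t := hstrip t (by omega)
    have h4 := chain_le n y hy (s - 1 - (t + 1)) (t + 1) (by omega)
    have e : t + 1 + (s - 1 - (t + 1)) = s - 1 := by omega
    rw [e] at h4
    omega

/-- The `*`-operation preserves pairs of horizontal strips: if `μ/α` and `ν/β`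
are horizontal strips, then so are `λ(μ,ν)/λ(α,β)` and `ρ(μ,ν)/ρ(α,β)`. -/
theorem star_preserves_horizontal_strips (n : ℕ) (α β μ ν : ℕ → ℕ)
    (hα : IsPartitionN n α) (hβ : IsPartitionN n β)
    (hμ : IsPartitionN n μ) (hν : IsPartitionN n ν)
    (hαμ : ∀ k, α k ≤ μ k) (hβν : ∀ k, β k ≤ ν k)
    (hstrip1 : ∀ k, k + 1 < n → μ (k + 1) ≤ α k)
    (hstrip2 : ∀ k, k + 1 < n → ν (k + 1) ≤ β k) :
    (∀ k, k + 1 < n → lamStar n μ ν (k + 1) ≤ lamStar n α β k) ∧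
    (∀ k, k + 1 < n → rhoStar n μ ν (k + 1) ≤ rhoStar n α β k) := by
  obtain ⟨hαa, -⟩ := hα
  obtain ⟨hβa, -⟩ := hβ
  obtain ⟨hμa, -⟩ := hμ
  obtain ⟨hνa, -⟩ := hν
  constructor
  · intro k hk
    unfold lamStar
    have h := key n (fun j => (ν j : ℤ) - (j + 1)) (fun j => (β j : ℤ) - (j + 1))
      ((μ (k+1) : ℤ) - ((k+1 : ℕ) + 1)) ((α k : ℤ) - (k + 1))
      (fun j _ => by
        have := hνa (by omega : j ≤ j + 1)
        push_cast
        omega)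
      (fun j _ => by
        have := hβa (by omega : j ≤ j + 1)
        push_cast
        omega)
      (fun j _ => by
        have := hβν j
        push_cast
        omega)
      (fun j hj => by
        have := hstrip2 j hj
        push_cast
        omega)
      (by
        have := hstrip1 k hk
        push_cast
        omega)
    convert h using 4
  · intro k hk
    unfold rhoStar
    have h := key n (fun j => (μ j : ℤ) - (j + 1)) (fun j => (α j : ℤ) - (j + 1))
      ((ν (k+1) : ℤ) - ((k+1 : ℕ) + 1) + 1) ((β k : ℤ) - (k + 1) + 1)
      (fun j _ => by
        have := hμa (by omega : j ≤ j + 1)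
        push_cast
        omega)
      (fun j _ => by
        have := hαa (by omega : j ≤ j + 1)
        push_cast
        omega)
      (fun j _ => by
        have := hαμ j
        push_cast
        omega)
      (fun j hj => by
        have := hstrip1 j hj
        push_cast
        omega)
      (by
        have := hstrip2 k hk
        push_cast
        omega)
    have e1 : ((Finset.range n).filter
        (fun t => (ν (k+1) : ℤ) - ((k+1 : ℕ) + 1) < (μ t : ℤ) - (t + 1))) =
        ((Finset.range n).filter
        (fun t => (ν (k+1) : ℤ) - ((k+1 : ℕ) + 1) + 1 ≤ (μ t : ℤ) - (t + 1))) := by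
      apply Finset.filter_congr
      intro t _
      constructor <;> intro <;> omega
    have e2 : ((Finset.range n).filter
        (fun t => (β k : ℤ) - ((k : ℕ) + 1) < (α t : ℤ) - (t + 1))) =
        ((Finset.range n).filter
        (fun t => (β k : ℤ) - ((k : ℕ) + 1) + 1 ≤ (α t : ℤ) - (t + 1))) := by
      apply Finset.filter_congr
      intro t _
      constructor <;> intro <;> omega
    rw [e1, e2]
    beta_reduce at h
    omega
end

section
/- (Minimal preimage for ρ.) Let τ, ν and μ be partitions with n parts such that ρ(μ,ν) = τ. Set b_j := τ_j − ν_j + j − 1 for 1 ≤ j ≤ n and b_0 := 0. Then μ_i ≥ τ_j whenever b_{j−1} < i ≤ b_j; equivalently, μ contains the partition θ(τ,ν) having b_1 parts equal to τ_1, b_2 − b_1 parts equal to τ_2, b_3 − b_2 parts equal to τ_3, and so on. -/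
/-- Minimal preimage for `ρ`: if `ρ(μ,ν) = τ` and `b_j = τ_j − ν_j + j − 1`
(1-indexed, `b_0 = 0`), then `μ_i ≥ τ_j` whenever `b_{j−1} < i ≤ b_j`;
that is, `μ` contains the partition `θ(τ,ν)` with `b_j − b_{j−1}` parts
equal to `τ_j`. (Below everything is 0-indexed: row `j` stands for row
`j+1`, and `b (j+1) = τ_j − ν_j + j`.) -/
theorem star_rho_minimal_preimage (n : ℕ) (τ ν μ : ℕ → ℕ)
    (hτ : IsPartitionN n τ) (hν : IsPartitionN n ν) (hμ : IsPartitionN n μ)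
    (hρ : ∀ j, j < n → rhoStar n μ ν j = (τ j : ℤ))
    (b : ℕ → ℤ) (hb0 : b 0 = 0)
    (hb : ∀ j, j < n → b (j + 1) = (τ j : ℤ) - (ν j : ℤ) + j) :
    ∀ j, j < n → ∀ i : ℕ, b j < (i : ℤ) + 1 → (i : ℤ) + 1 ≤ b (j + 1) →
      τ j ≤ μ i := by
  intro j hj i _hi1 hi2
  set F := (Finset.range n).filter
      (fun k => (ν j : ℤ) - (j + 1) < (μ k : ℤ) - (k + 1)) with hF
  have hcard : (F.card : ℤ) = (τ j : ℤ) - (ν j : ℤ) + j := by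
    have h := hρ j hj
    unfold rhoStar at h
    rw [← hF] at h
    linarith
  have hdown : ∀ k k', k' ≤ k → k ∈ F → k' ∈ F := by
    intro k k' hkk hk
    simp only [hF, Finset.mem_filter, Finset.mem_range] at hk ⊢
    refine ⟨lt_of_le_of_lt hkk hk.1, ?_⟩
    have h1 : μ k ≤ μ k' := hμ.1 hkk
    have h2 : (k' : ℤ) ≤ (k : ℤ) := by exact_mod_cast hkk
    have h3 : (μ k : ℤ) ≤ (μ k' : ℤ) := by exact_mod_cast h1
    have := hk.2
    linarith
  have hmem : ∀ m, m < F.card → m ∈ F := by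
    intro m hm
    by_contra hmF
    have hsub : F ⊆ Finset.range m := by
      intro k hk
      simp only [Finset.mem_range]
      by_contra hkm
      exact hmF (hdown k m (le_of_not_gt hkm) hk)
    have := Finset.card_le_card hsub
    simp only [Finset.card_range] at this
    omega
  have hib : (i : ℤ) + 1 ≤ (F.card : ℤ) := by
    rw [hcard, ← hb j hj]; exact hi2
  have hiFc : i < F.card := by
    have : (i : ℤ) < (F.card : ℤ) := by linarith
    exact_mod_cast this
  set i' := F.card - 1 with hi'
  have hi'F : i' ∈ F := hmem i' (by omega)
  have hii' : i ≤ i' := by omega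
  have hmu : μ i' ≤ μ i := hμ.1 hii'
  simp only [hF, Finset.mem_filter, Finset.mem_range] at hi'F
  have h2 := hi'F.2
  have hi'c : (i' : ℤ) = (F.card : ℤ) - 1 := by
    have : 0 < F.card := by omega
    push_cast [hi']
    omega
  have hτμ : (τ j : ℤ) ≤ (μ i' : ℤ) := by linarith
  have : (τ j : ℤ) ≤ (μ i : ℤ) := by
    have : (μ i' : ℤ) ≤ (μ i : ℤ) := by exact_mod_cast hmu
    linarith
  exact_mod_cast this
end
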